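/- arXiv:1809.10462 — 5 statements merged into one kernel-verified Lean document; each statement's English description precedes it below -/
import Mathlib

section
/- There exists a constant c(L) depending only on L such that the following holds. Let X be a centered random vector in ℝ^d satisfying the L₄–L₂ norm equivalence with constant L, with covariance Σ = 𝔼(X⊗X). For α > 0, let X̃ = X·1_{‖X‖₂ ≤ α} and Σ̃ = 𝔼(X̃⊗X̃). Then ‖Σ̃ − Σ‖ ≤ c(L) ‖Σ‖ Tr(Σ) / α². -/
open MeasureTheory ProbabilityTheory
open scoped RealInnerProductSpace

/-- The ℓ₂→ℓ₂ operator norm of a `d × d` real matrix. -/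
noncomputable def matOpNorm {d : ℕ} (A : Matrix (Fin d) (Fin d) ℝ) : ℝ :=
  ‖Matrix.toEuclideanCLM (𝕜 := ℝ) (n := Fin d) A‖

/-- The outer product `z zᵀ` of a vector with itself. -/
noncomputable def outerMat {d : ℕ} (z : EuclideanSpace ℝ (Fin d)) :
    Matrix (Fin d) (Fin d) ℝ := Matrix.of fun i j => z i * z j

/-- Covariance-type matrix `𝔼 (X ⊗ X)` of a random vector. -/
noncomputable def covMat {Ω : Type*} [MeasurableSpace Ω] (P : Measure Ω) {d : ℕ}
    (X : Ω → EuclideanSpace ℝ (Fin d)) : Matrix (Fin d) (Fin d) ℝ :=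
  Matrix.of fun i j => ∫ ω, X ω i * X ω j ∂P

/-- Effective rank `Tr(A)/‖A‖`. -/
noncomputable def effRank {d : ℕ} (A : Matrix (Fin d) (Fin d) ℝ) : ℝ :=
  A.trace / matOpNorm A

/-- The squared weak variance `R_Z² = sup_{u,v ∈ S^{d-1}} 𝔼 (vᵀ (Z⊗Z - 𝔼 Z⊗Z) u)²`. -/
noncomputable def weakVarSq {Ω : Type*} [MeasurableSpace Ω] (P : Measure Ω) {d : ℕ}
    (Z : Ω → EuclideanSpace ℝ (Fin d)) : ℝ :=
  ⨆ p : Metric.sphere (0 : EuclideanSpace ℝ (Fin d)) 1 ×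
        Metric.sphere (0 : EuclideanSpace ℝ (Fin d)) 1,
    ∫ ω, (∑ i, ∑ j,
      (p.2 : EuclideanSpace ℝ (Fin d)) i * (Z ω i * Z ω j - covMat P Z i j) *
      (p.1 : EuclideanSpace ℝ (Fin d)) j) ^ 2 ∂P

/-- The weak variance `R_Z`. -/
noncomputable def weakVar {Ω : Type*} [MeasurableSpace Ω] (P : Measure Ω) {d : ℕ}
    (Z : Ω → EuclideanSpace ℝ (Fin d)) : ℝ :=
  Real.sqrt (weakVarSq P Z)

/-- Truncation `X 1_{‖X‖₂ ≤ α}`. -/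
noncomputable def trunc {Ω : Type*} {d : ℕ} (X : Ω → EuclideanSpace ℝ (Fin d)) (α : ℝ) :
    Ω → EuclideanSpace ℝ (Fin d) := fun ω => if ‖X ω‖ ≤ α then X ω else 0

/-- `X` is a centered random vector. -/
def IsCentered {Ω : Type*} [MeasurableSpace Ω] (P : Measure Ω) {d : ℕ}
    (X : Ω → EuclideanSpace ℝ (Fin d)) : Prop :=
  ∀ i : Fin d, ∫ ω, X ω i ∂P = 0

/-- `X` is `L`-subgaussian: all moments exist and
`(𝔼|⟨X,t⟩|^p)^{1/p} ≤ L √p (𝔼⟨X,t⟩²)^{1/2}` for all `t` and `p ≥ 2`. -/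
def IsLSubgaussian {Ω : Type*} [MeasurableSpace Ω] (P : Measure Ω) {d : ℕ}
    (X : Ω → EuclideanSpace ℝ (Fin d)) (L : ℝ) : Prop :=
  ∀ t : EuclideanSpace ℝ (Fin d), ∀ p : ℝ, 2 ≤ p →
    Integrable (fun ω => |⟪X ω, t⟫| ^ p) P ∧
    (∫ ω, |⟪X ω, t⟫| ^ p ∂P) ^ (1 / p) ≤
      L * Real.sqrt p * (∫ ω, ⟪X ω, t⟫ ^ 2 ∂P) ^ ((1 : ℝ) / 2)

/-- A centered `X` satisfies `L₄-L₂` norm equivalence with constant `L`: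
fourth moments exist and `(𝔼⟨X,t⟩⁴)^{1/4} ≤ L (𝔼⟨X,t⟩²)^{1/2}` for all `t`. -/
def SatisfiesL4L2 {Ω : Type*} [MeasurableSpace Ω] (P : Measure Ω) {d : ℕ}
    (X : Ω → EuclideanSpace ℝ (Fin d)) (L : ℝ) : Prop :=
  ∀ t : EuclideanSpace ℝ (Fin d),
    Integrable (fun ω => ⟪X ω, t⟫ ^ 4) P ∧
    (∫ ω, ⟪X ω, t⟫ ^ 4 ∂P) ^ ((1 : ℝ) / 4) ≤
      L * (∫ ω, ⟪X ω, t⟫ ^ 2 ∂P) ^ ((1 : ℝ) / 2)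

/-- `Xi` is a sequence of independent copies of `X`. -/
def IIDCopies {Ω : Type*} [MeasurableSpace Ω] (P : Measure Ω) {d N : ℕ}
    (X : Ω → EuclideanSpace ℝ (Fin d)) (Xi : Fin N → Ω → EuclideanSpace ℝ (Fin d)) : Prop :=
  (∀ i, Measurable (Xi i)) ∧ iIndepFun Xi P ∧
    ∀ i, Measure.map (Xi i) P = Measure.map X P

/-!
The bound holds with `c(L) = L⁴`. On unit vectors `u, v` the bilinear form of `Σ̃ - Σ` is
`-𝔼 ⟨X,u⟩⟨X,v⟩ 1_{‖X‖ > α}`, and `1_{‖X‖ > α} ≤ ‖X‖² / α²`, so it suffices to bound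
`𝔼 ⟨X,u⟩² ‖X‖² = ∑ᵢ 𝔼 ⟨X,u⟩² Xᵢ²`. By Cauchy–Schwarz and the `L₄–L₂` equivalence each term is at
most `L⁴ 𝔼 ⟨X,u⟩² 𝔼 Xᵢ²`, and summing gives `L⁴ ⟨Σu,u⟩ Tr Σ ≤ L⁴ ‖Σ‖ Tr Σ`.
-/

section Euclidean

variable {Ω : Type*} {d : ℕ}

lemma inner_sq_mul_norm_sq_eq_sum (x t : EuclideanSpace ℝ (Fin d)) :
    ⟪x, t⟫ ^ 2 * ‖x‖ ^ 2 = ∑ i, ⟪x, t⟫ ^ 2 * ⟪x, EuclideanSpace.single i 1⟫ ^ 2 := by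
  simp [EuclideanSpace.real_norm_sq_eq, Finset.mul_sum, EuclideanSpace.inner_single_right]

lemma inner_trunc_mul_inner_trunc (X : Ω → EuclideanSpace ℝ (Fin d)) (α : ℝ)
    (u v : EuclideanSpace ℝ (Fin d)) :
    (fun ω => ⟪trunc X α ω, u⟫ * ⟪trunc X α ω, v⟫) =
      {ω | ‖X ω‖ ≤ α}.indicator fun ω => ⟪X ω, u⟫ * ⟪X ω, v⟫ := by
  ext ω
  by_cases h : ‖X ω‖ ≤ α <;> simp [trunc, h]

lemma abs_inner_trunc_mul_sub_le (X : Ω → EuclideanSpace ℝ (Fin d)) {α : ℝ} (hα : 0 < α)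
    (u v : EuclideanSpace ℝ (Fin d)) (ω : Ω) :
    |⟪trunc X α ω, u⟫ * ⟪trunc X α ω, v⟫ - ⟪X ω, u⟫ * ⟪X ω, v⟫| ≤
      (⟪X ω, u⟫ ^ 2 * ‖X ω‖ ^ 2 + ⟪X ω, v⟫ ^ 2 * ‖X ω‖ ^ 2) / (2 * α ^ 2) := by
  by_cases h : ‖X ω‖ ≤ α
  · simp only [trunc, h, if_true, sub_self, abs_zero]
    positivity
  · have hαX : α ^ 2 ≤ ‖X ω‖ ^ 2 := pow_le_pow_left₀ hα.le (not_le.1 h).le 2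
    simp only [trunc, h, if_false, inner_zero_left, zero_mul, zero_sub, abs_neg, abs_mul]
    rw [le_div_iff₀ (by positivity)]
    nlinarith [sq_nonneg (|⟪X ω, u⟫| - |⟪X ω, v⟫|), sq_abs ⟪X ω, u⟫, sq_abs ⟪X ω, v⟫,
      mul_nonneg (add_nonneg (sq_nonneg ⟪X ω, u⟫) (sq_nonneg ⟪X ω, v⟫)) (sub_nonneg.2 hαX)]

end Euclidean

section CovarianceMatrix

variable {Ω : Type*} [MeasurableSpace Ω] {P : Measure Ω} {d : ℕ}

lemma inner_toEuclideanCLM_covMat {Z : Ω → EuclideanSpace ℝ (Fin d)}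
    (hZ : ∀ u v, Integrable (fun ω => ⟪Z ω, u⟫ * ⟪Z ω, v⟫) P) (u v : EuclideanSpace ℝ (Fin d)) :
    ⟪u, Matrix.toEuclideanCLM (𝕜 := ℝ) (covMat P Z) v⟫ = ∫ ω, ⟪Z ω, u⟫ * ⟪Z ω, v⟫ ∂P := by
  have hcoord : ∀ i j, Integrable (fun ω => Z ω i * Z ω j) P := fun i j => by
    simpa [EuclideanSpace.inner_single_right] using
      hZ (EuclideanSpace.single i 1) (EuclideanSpace.single j 1)
  have hexpand : ∀ ω, ⟪Z ω, u⟫ * ⟪Z ω, v⟫ = ∑ i, ∑ j, u i * (v j * (Z ω i * Z ω j)) := by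
    intro ω
    simp only [PiLp.inner_apply, RCLike.inner_apply, conj_trivial, Finset.sum_mul_sum]
    exact Finset.sum_congr rfl fun i _ => Finset.sum_congr rfl fun j _ => by ring
  simp_rw [Matrix.inner_toEuclideanCLM, hexpand]
  rw [integral_finsetSum _ fun i _ => integrable_finsetSum _ fun j _ =>
    ((hcoord i j).const_mul _).const_mul _]
  refine Finset.sum_congr rfl fun i _ => ?_
  rw [integral_finsetSum _ fun j _ => ((hcoord i j).const_mul _).const_mul _,
    Matrix.mulVec, dotProduct, Finset.mul_sum]
  refine Finset.sum_congr rfl fun j _ => ?_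
  simp only [covMat, Matrix.of_apply, integral_const_mul]
  ring

lemma integral_inner_sq_le_matOpNorm_covMat {Z : Ω → EuclideanSpace ℝ (Fin d)}
    (hZ : ∀ u v, Integrable (fun ω => ⟪Z ω, u⟫ * ⟪Z ω, v⟫) P) (t : EuclideanSpace ℝ (Fin d)) :
    ∫ ω, ⟪Z ω, t⟫ ^ 2 ∂P ≤ matOpNorm (covMat P Z) * ‖t‖ ^ 2 := by
  simp_rw [sq, ← inner_toEuclideanCLM_covMat hZ]
  calc ⟪t, Matrix.toEuclideanCLM (𝕜 := ℝ) (covMat P Z) t⟫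
      ≤ ‖t‖ * ‖Matrix.toEuclideanCLM (𝕜 := ℝ) (covMat P Z) t‖ := real_inner_le_norm _ _
    _ ≤ ‖t‖ * (matOpNorm (covMat P Z) * ‖t‖) := by
      gcongr
      exact ContinuousLinearMap.le_opNorm _ _
    _ = matOpNorm (covMat P Z) * (‖t‖ * ‖t‖) := by ring

lemma trace_covMat (Z : Ω → EuclideanSpace ℝ (Fin d)) :
    (covMat P Z).trace = ∑ i, ∫ ω, ⟪Z ω, EuclideanSpace.single i 1⟫ ^ 2 ∂P := by
  simp [Matrix.trace, covMat, EuclideanSpace.inner_single_right, sq]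

lemma trace_covMat_nonneg (Z : Ω → EuclideanSpace ℝ (Fin d)) : 0 ≤ (covMat P Z).trace := by
  rw [trace_covMat]
  exact Finset.sum_nonneg fun i _ => integral_nonneg fun ω => sq_nonneg _

end CovarianceMatrix

namespace SatisfiesL4L2

variable {Ω : Type*} [MeasurableSpace Ω] {P : Measure Ω} {d : ℕ}
  {X : Ω → EuclideanSpace ℝ (Fin d)} {L : ℝ}

lemma memLp_inner_sq (hL : SatisfiesL4L2 P X L) (hX : AEMeasurable X P)
    (t : EuclideanSpace ℝ (Fin d)) : MemLp (fun ω => ⟪X ω, t⟫ ^ 2) 2 P :=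
  (memLp_two_iff_integrable_sq ((hX.inner_const (c := t)).pow_const 2).aestronglyMeasurable).2
    (by simpa only [← pow_mul] using (hL t).1)

lemma integrable_inner_sq_mul_inner_sq (hL : SatisfiesL4L2 P X L) (hX : AEMeasurable X P)
    (s t : EuclideanSpace ℝ (Fin d)) :
    Integrable (fun ω => ⟪X ω, s⟫ ^ 2 * ⟪X ω, t⟫ ^ 2) P :=
  (hL.memLp_inner_sq hX s).integrable_mul (hL.memLp_inner_sq hX t)

lemma integrable_inner_mul_inner [IsFiniteMeasure P] (hL : SatisfiesL4L2 P X L)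
    (hX : AEMeasurable X P) (u v : EuclideanSpace ℝ (Fin d)) :
    Integrable (fun ω => ⟪X ω, u⟫ * ⟪X ω, v⟫) P := by
  have h2 : ∀ t, MemLp (fun ω => ⟪X ω, t⟫) 2 P := fun t =>
    (memLp_two_iff_integrable_sq (hX.inner_const (c := t)).aestronglyMeasurable).2
      ((hL.memLp_inner_sq hX t).integrable one_le_two)
  exact (h2 u).integrable_mul (h2 v)

lemma rpow_half_integral_inner_pow_four_le (hL : SatisfiesL4L2 P X L)
    (t : EuclideanSpace ℝ (Fin d)) :
    (∫ ω, ⟪X ω, t⟫ ^ 4 ∂P) ^ (1 / 2 : ℝ) ≤ L ^ 2 * ∫ ω, ⟪X ω, t⟫ ^ 2 ∂P := by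
  have h4 : 0 ≤ ∫ ω, ⟪X ω, t⟫ ^ 4 ∂P := integral_nonneg fun ω => by positivity
  have h2 : 0 ≤ ∫ ω, ⟪X ω, t⟫ ^ 2 ∂P := integral_nonneg fun ω => by positivity
  have hsq := pow_le_pow_left₀ (by positivity) (hL t).2 2
  rw [mul_pow, ← Real.rpow_mul_natCast h4, ← Real.rpow_mul_natCast h2] at hsq
  norm_num at hsq
  exact hsq

lemma integral_inner_sq_mul_inner_sq_le (hL : SatisfiesL4L2 P X L) (hX : AEMeasurable X P)
    (s t : EuclideanSpace ℝ (Fin d)) :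
    ∫ ω, ⟪X ω, s⟫ ^ 2 * ⟪X ω, t⟫ ^ 2 ∂P ≤
      L ^ 4 * (∫ ω, ⟪X ω, s⟫ ^ 2 ∂P) * ∫ ω, ⟪X ω, t⟫ ^ 2 ∂P := by
  have hpow : ∀ u, (fun ω => (⟪X ω, u⟫ ^ 2) ^ (2 : ℝ)) = fun ω => ⟪X ω, u⟫ ^ 4 := fun u => by
    ext ω; rw [Real.rpow_two, ← pow_mul]
  have hcs := integral_mul_le_Lp_mul_Lq_of_nonneg Real.HolderConjugate.two_two
    (Filter.Eventually.of_forall fun ω => sq_nonneg ⟪X ω, s⟫)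
    (Filter.Eventually.of_forall fun ω => sq_nonneg ⟪X ω, t⟫)
    (by simpa using hL.memLp_inner_sq hX s) (by simpa using hL.memLp_inner_sq hX t)
  rw [hpow, hpow] at hcs
  calc _ ≤ _ := hcs
    _ ≤ (L ^ 2 * ∫ ω, ⟪X ω, s⟫ ^ 2 ∂P) * (L ^ 2 * ∫ ω, ⟪X ω, t⟫ ^ 2 ∂P) :=
      mul_le_mul (hL.rpow_half_integral_inner_pow_four_le s)
        (hL.rpow_half_integral_inner_pow_four_le t) (by positivity) (by positivity)
    _ = _ := by ring

lemma integrable_inner_sq_mul_norm_sq (hL : SatisfiesL4L2 P X L) (hX : AEMeasurable X P)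
    (t : EuclideanSpace ℝ (Fin d)) : Integrable (fun ω => ⟪X ω, t⟫ ^ 2 * ‖X ω‖ ^ 2) P := by
  simp_rw [inner_sq_mul_norm_sq_eq_sum]
  exact integrable_finsetSum _ fun i _ => hL.integrable_inner_sq_mul_inner_sq hX _ _

lemma integral_inner_sq_mul_norm_sq_le (hL : SatisfiesL4L2 P X L) (hX : AEMeasurable X P)
    (t : EuclideanSpace ℝ (Fin d)) :
    ∫ ω, ⟪X ω, t⟫ ^ 2 * ‖X ω‖ ^ 2 ∂P ≤ L ^ 4 * (∫ ω, ⟪X ω, t⟫ ^ 2 ∂P) * (covMat P X).trace := by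
  simp_rw [inner_sq_mul_norm_sq_eq_sum]
  rw [integral_finsetSum _ fun i _ => hL.integrable_inner_sq_mul_inner_sq hX _ _, trace_covMat,
    Finset.mul_sum]
  exact Finset.sum_le_sum fun i _ => hL.integral_inner_sq_mul_inner_sq_le hX t _

lemma integral_inner_sq_mul_norm_sq_le_matOpNorm [IsFiniteMeasure P]
    (hL : SatisfiesL4L2 P X L) (hX : AEMeasurable X P) (t : EuclideanSpace ℝ (Fin d)) :
    ∫ ω, ⟪X ω, t⟫ ^ 2 * ‖X ω‖ ^ 2 ∂P ≤
      L ^ 4 * matOpNorm (covMat P X) * (covMat P X).trace * ‖t‖ ^ 2 :=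
  calc _ ≤ L ^ 4 * (∫ ω, ⟪X ω, t⟫ ^ 2 ∂P) * (covMat P X).trace :=
        hL.integral_inner_sq_mul_norm_sq_le hX t
    _ ≤ L ^ 4 * (matOpNorm (covMat P X) * ‖t‖ ^ 2) * (covMat P X).trace := by
        gcongr
        · exact trace_covMat_nonneg X
        · exact integral_inner_sq_le_matOpNorm_covMat (hL.integrable_inner_mul_inner hX) t
    _ = _ := by ring

theorem matOpNorm_covMat_trunc_sub_le [IsFiniteMeasure P] (hL : SatisfiesL4L2 P X L)
    (hX : Measurable X) {α : ℝ} (hα : 0 < α) :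
    matOpNorm (covMat P (trunc X α) - covMat P X) ≤
      L ^ 4 * matOpNorm (covMat P X) * (covMat P X).trace / α ^ 2 := by
  have hXX := hL.integrable_inner_mul_inner hX.aemeasurable
  have hYY : ∀ u v, Integrable (fun ω => ⟪trunc X α ω, u⟫ * ⟪trunc X α ω, v⟫) P := fun u v => by
    rw [inner_trunc_mul_inner_trunc]
    exact (hXX u v).indicator (measurableSet_le hX.norm measurable_const)
  have hunit : ∀ u : EuclideanSpace ℝ (Fin d), ‖u‖ = 1 →
      ∫ ω, ⟪X ω, u⟫ ^ 2 * ‖X ω‖ ^ 2 ∂P ≤ L ^ 4 * matOpNorm (covMat P X) * (covMat P X).trace :=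
    fun u hu => by simpa [hu] using hL.integral_inner_sq_mul_norm_sq_le_matOpNorm hX.aemeasurable u
  have hnorm : ∀ u, Integrable (fun ω => ⟪X ω, u⟫ ^ 2 * ‖X ω‖ ^ 2) P :=
    hL.integrable_inner_sq_mul_norm_sq hX.aemeasurable
  have hopNorm : 0 ≤ matOpNorm (covMat P X) := norm_nonneg _
  have htrace := trace_covMat_nonneg (P := P) X
  refine ContinuousLinearMap.opNorm_le_of_re_inner_le (by positivity) fun u v hu hv => ?_
  rw [RCLike.re_to_real, real_inner_comm, map_sub, sub_apply, inner_sub_right,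
    inner_toEuclideanCLM_covMat hYY, inner_toEuclideanCLM_covMat hXX,
    ← integral_sub (hYY v u) (hXX v u)]
  calc _ ≤ ∫ ω, (⟪X ω, v⟫ ^ 2 * ‖X ω‖ ^ 2 + ⟪X ω, u⟫ ^ 2 * ‖X ω‖ ^ 2) / (2 * α ^ 2) ∂P :=
        integral_mono ((hYY v u).sub (hXX v u)) (((hnorm v).add (hnorm u)).div_const _)
          fun ω => (le_abs_self _).trans (abs_inner_trunc_mul_sub_le X hα v u ω)
    _ = ((∫ ω, ⟪X ω, v⟫ ^ 2 * ‖X ω‖ ^ 2 ∂P) + ∫ ω, ⟪X ω, u⟫ ^ 2 * ‖X ω‖ ^ 2 ∂P) /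
          (2 * α ^ 2) := by
        rw [integral_div, integral_add (hnorm v) (hnorm u)]
    _ ≤ (L ^ 4 * matOpNorm (covMat P X) * (covMat P X).trace +
          L ^ 4 * matOpNorm (covMat P X) * (covMat P X).trace) / (2 * α ^ 2) := by
        gcongr
        exacts [hunit v hv, hunit u hu]
    _ = _ := by ring

end SatisfiesL4L2

/-- For every `L ≥ 1` there is `c(L) > 0` such that for any centered `X` satisfying the
`L₄-L₂` norm equivalence with constant `L` and any truncation level `α > 0`, the covariance
of the truncation `X̃ = X 1_{‖X‖₂ ≤ α}` satisfies `‖Σ̃ - Σ‖ ≤ c(L) ‖Σ‖ Tr(Σ) / α²`. -/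
theorem truncated_cov_opNorm_bound :
    ∀ L : ℝ, 1 ≤ L → ∃ c : ℝ, 0 < c ∧
      ∀ (Ω : Type*) [MeasurableSpace Ω] (P : Measure Ω) [IsProbabilityMeasure P]
        (d : ℕ) (X : Ω → EuclideanSpace ℝ (Fin d)),
        Measurable X → IsCentered P X → SatisfiesL4L2 P X L →
        ∀ α : ℝ, 0 < α →
          matOpNorm (covMat P (trunc X α) - covMat P X) ≤
            c * matOpNorm (covMat P X) * (covMat P X).trace / α ^ 2 :=
  fun L hL => ⟨L ^ 4, pow_pos (zero_lt_one.trans_le hL) 4,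
    fun _ _ _ _ _ _ hX _ hL4 _ hα => hL4.matOpNorm_covMat_trunc_sub_le hX hα⟩
end

section
/- Let X be a centered random vector in ℝ^d satisfying the L₄–L₂ norm equivalence with constant L, let Σ = 𝔼(X⊗X), and for α > 0 let X̃ = X·1_{‖X‖₂ ≤ α}. Define v(X)² = sup_{v ∈ S^{d−1}} 𝔼⟨X,v⟩⁴. Then R_{X̃} ≤ v(X) and v(X) ≤ L²‖Σ‖; in particular R_{X̃} ≤ L²‖Σ‖. -/
open MeasureTheory ProbabilityTheory
open scoped RealInnerProductSpace

/-- The weak fourth moment `v(X) = (sup_{v ∈ S^{d-1}} 𝔼⟨X,v⟩⁴)^{1/2}`. -/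
noncomputable def weakFourth {Ω : Type*} [MeasurableSpace Ω] (P : Measure Ω) {d : ℕ}
    (X : Ω → EuclideanSpace ℝ (Fin d)) : ℝ :=
  Real.sqrt (⨆ v : Metric.sphere (0 : EuclideanSpace ℝ (Fin d)) 1,
    ∫ ω, ⟪X ω, (v : EuclideanSpace ℝ (Fin d))⟫ ^ 4 ∂P)

/-!
For unit vectors `u, v` put `g = ⟪X̃, v⟫ ⟪X̃, u⟫`. The `(u, v)` term of the weak variance of `X̃`
is the variance of `g`, hence at most `𝔼 g² ≤ (𝔼⟪X̃, v⟫⁴ + 𝔼⟪X̃, u⟫⁴) / 2`, and truncation only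
decreases `|⟪X, ·⟫|`; this gives `R_{X̃} ≤ v(X)`. For the second bound, the `L₄-L₂` norm
equivalence gives `𝔼⟪X, v⟫⁴ ≤ L⁴ (𝔼⟪X, v⟫²)²`, and `𝔼⟪X, v⟫² = vᵀ Σ v ≤ ‖Σ‖`.
-/

noncomputable def weakFourthSq {Ω : Type*} [MeasurableSpace Ω] (P : Measure Ω) {d : ℕ}
    (X : Ω → EuclideanSpace ℝ (Fin d)) : ℝ :=
  ⨆ v : Metric.sphere (0 : EuclideanSpace ℝ (Fin d)) 1,
    ∫ ω, ⟪X ω, (v : EuclideanSpace ℝ (Fin d))⟫ ^ 4 ∂P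

section EuclideanAlgebra

variable {d : ℕ}

lemma inner_mul_inner_eq_sum (x u v : EuclideanSpace ℝ (Fin d)) :
    ⟪x, v⟫ * ⟪x, u⟫ = ∑ i, ∑ j, v i * (x i * x j) * u j := by
  simp only [PiLp.inner_apply, RCLike.inner_apply, conj_trivial, Finset.sum_mul_sum]
  exact Finset.sum_congr rfl fun i _ => Finset.sum_congr rfl fun j _ => by ring

lemma sum_mul_sub_mul_eq (x u v : EuclideanSpace ℝ (Fin d)) (A : Matrix (Fin d) (Fin d) ℝ) :
    ∑ i, ∑ j, v i * (x i * x j - A i j) * u j =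
      ⟪x, v⟫ * ⟪x, u⟫ - ∑ i, ∑ j, v i * A i j * u j := by
  simp only [inner_mul_inner_eq_sum, mul_sub, sub_mul, Finset.sum_sub_distrib]

lemma sum_mul_mul_le_matOpNorm (A : Matrix (Fin d) (Fin d) ℝ) (u v : EuclideanSpace ℝ (Fin d)) :
    ∑ i, ∑ j, v i * A i j * u j ≤ matOpNorm A * ‖v‖ * ‖u‖ := by
  have hA : ∑ i, ∑ j, v i * A i j * u j = ⟪v, Matrix.toEuclideanCLM (𝕜 := ℝ) A u⟫ := by
    simp only [mul_comm, mul_left_comm, PiLp.inner_apply, Matrix.ofLp_toEuclideanCLM,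
      Matrix.mulVec, dotProduct, RCLike.inner_apply, Real.ringHom_apply, Finset.mul_sum, mul_assoc]
  calc ∑ i, ∑ j, v i * A i j * u j
      ≤ ‖v‖ * ‖Matrix.toEuclideanCLM (𝕜 := ℝ) A u‖ := hA ▸ real_inner_le_norm _ _
    _ ≤ ‖v‖ * (matOpNorm A * ‖u‖) := by gcongr; exact ContinuousLinearMap.le_opNorm _ _
    _ = matOpNorm A * ‖v‖ * ‖u‖ := by ring

end EuclideanAlgebra

section Moments

variable {Ω : Type*} [MeasurableSpace Ω] {P : Measure Ω} {d : ℕ}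
  {Z : Ω → EuclideanSpace ℝ (Fin d)}

lemma memLp_inner_of_integrable_pow_four (hZ : Measurable Z) {t : EuclideanSpace ℝ (Fin d)}
    (h : Integrable (fun ω => ⟪Z ω, t⟫ ^ 4) P) : MemLp (fun ω => ⟪Z ω, t⟫) 4 P := by
  refine (integrable_norm_rpow_iff (hZ.inner measurable_const).aestronglyMeasurable
    (by norm_num) (by norm_num)).1 ?_
  simpa only [ENNReal.toReal_ofNat, Real.norm_eq_abs, Real.rpow_ofNat, Even.pow_abs ⟨2, rfl⟩]
    using h

lemma memLp_two_inner_mul_inner (hZ : ∀ t, MemLp (fun ω => ⟪Z ω, t⟫) 4 P)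
    (u v : EuclideanSpace ℝ (Fin d)) : MemLp (fun ω => ⟪Z ω, v⟫ * ⟪Z ω, u⟫) 2 P :=
  have : ENNReal.HolderTriple 4 4 2 := ⟨by
    rw [← two_mul, show (4 : ENNReal) = 2 * 2 by norm_num, ENNReal.mul_inv (by simp) (by simp),
      ← mul_assoc, ENNReal.mul_inv_cancel (by simp) (by simp), one_mul]⟩
  (hZ u).mul (hZ v)

variable [IsFiniteMeasure P]

lemma integral_inner_mul_inner (hZ : ∀ t, MemLp (fun ω => ⟪Z ω, t⟫) 4 P)
    (u v : EuclideanSpace ℝ (Fin d)) :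
    ∫ ω, ⟪Z ω, v⟫ * ⟪Z ω, u⟫ ∂P = ∑ i, ∑ j, v i * covMat P Z i j * u j := by
  have hZij (i j : Fin d) : Integrable (fun ω => Z ω i * Z ω j) P := by
    have := memLp_two_inner_mul_inner hZ (EuclideanSpace.single j 1) (EuclideanSpace.single i 1)
    simpa [EuclideanSpace.inner_single_right, mul_comm] using this.integrable one_le_two
  simp_rw [inner_mul_inner_eq_sum]
  rw [integral_finsetSum _ fun i _ => integrable_finsetSum _ fun j _ =>
    ((hZij i j).const_mul _).mul_const _]
  refine Finset.sum_congr rfl fun i _ => ?_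
  rw [integral_finsetSum _ fun j _ => ((hZij i j).const_mul _).mul_const _]
  refine Finset.sum_congr rfl fun j _ => ?_
  rw [integral_mul_const, integral_const_mul]
  rfl

lemma integral_inner_sq_le_matOpNorm (hZ : ∀ t, MemLp (fun ω => ⟪Z ω, t⟫) 4 P)
    {v : EuclideanSpace ℝ (Fin d)} (hv : ‖v‖ = 1) :
    ∫ ω, ⟪Z ω, v⟫ ^ 2 ∂P ≤ matOpNorm (covMat P Z) := by
  simpa only [sq, integral_inner_mul_inner hZ, hv, mul_one] using
    sum_mul_mul_le_matOpNorm (covMat P Z) v v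

lemma weakVarSq_le [IsProbabilityMeasure P] (hZ : ∀ t, MemLp (fun ω => ⟪Z ω, t⟫) 4 P)
    {M : ℝ} (hM : 0 ≤ M) (h : ∀ v : EuclideanSpace ℝ (Fin d), ‖v‖ = 1 → ∫ ω, ⟪Z ω, v⟫ ^ 4 ∂P ≤ M) :
    weakVarSq P Z ≤ M := by
  refine Real.iSup_le (fun ⟨u, v⟩ => ?_) hM
  have hu : ‖(u : EuclideanSpace ℝ (Fin d))‖ = 1 := by simp
  have hv : ‖(v : EuclideanSpace ℝ (Fin d))‖ = 1 := by simp
  set g := fun ω => ⟪Z ω, v⟫ * ⟪Z ω, u⟫ with hg_def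
  have hg : MemLp g 2 P := memLp_two_inner_mul_inner hZ u v
  have hZ4 (w : EuclideanSpace ℝ (Fin d)) : Integrable (fun ω => ⟪Z ω, w⟫ ^ 4) P := by
    simpa [Even.pow_abs ⟨2, rfl⟩] using (hZ w).integrable_norm_pow (by norm_num)
  calc ∫ ω, (∑ i, ∑ j, (v : EuclideanSpace ℝ (Fin d)) i * (Z ω i * Z ω j - covMat P Z i j) *
        (u : EuclideanSpace ℝ (Fin d)) j) ^ 2 ∂P
      = ∫ ω, (g ω - ∫ ω', g ω' ∂P) ^ 2 ∂P := by
        simp_rw [sum_mul_sub_mul_eq, hg_def, integral_inner_mul_inner hZ]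
    _ = variance g P := (variance_eq_integral hg.aestronglyMeasurable.aemeasurable).symm
    _ ≤ ∫ ω, g ω ^ 2 ∂P := variance_le_expectation_sq hg.aestronglyMeasurable
    _ ≤ ∫ ω, (⟪Z ω, v⟫ ^ 4 + ⟪Z ω, u⟫ ^ 4) / 2 ∂P := by
        refine integral_mono hg.integrable_sq (((hZ4 v).add (hZ4 u)).div_const 2) fun ω => ?_
        have := two_mul_le_add_sq (⟪Z ω, v⟫ ^ 2) (⟪Z ω, u⟫ ^ 2)
        simp only [hg_def]
        linarith [mul_pow ⟪Z ω, v⟫ ⟪Z ω, u⟫ 2, pow_mul ⟪Z ω, v⟫ 2 2, pow_mul ⟪Z ω, u⟫ 2 2]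
    _ ≤ (M + M) / 2 := by
        rw [integral_div, integral_add (hZ4 v) (hZ4 u)]
        gcongr
        exacts [h v hv, h u hu]
    _ = M := by ring

end Moments

section WeakFourthMoment

variable {Ω : Type*} [MeasurableSpace Ω] {P : Measure Ω} {d : ℕ}
  {X : Ω → EuclideanSpace ℝ (Fin d)} {M : ℝ}

lemma weakFourth_eq_sqrt : weakFourth P X = √(weakFourthSq P X) := rfl

lemma weakFourthSq_nonneg : 0 ≤ weakFourthSq P X :=
  Real.iSup_nonneg fun _ => integral_nonneg fun _ => by positivity

lemma weakFourthSq_le (hM : 0 ≤ M)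
    (h : ∀ v : EuclideanSpace ℝ (Fin d), ‖v‖ = 1 → ∫ ω, ⟪X ω, v⟫ ^ 4 ∂P ≤ M) :
    weakFourthSq P X ≤ M :=
  Real.iSup_le (fun v => h v (by simp)) hM

lemma integral_inner_pow_four_le_weakFourthSq
    (h : ∀ v : EuclideanSpace ℝ (Fin d), ‖v‖ = 1 → ∫ ω, ⟪X ω, v⟫ ^ 4 ∂P ≤ M)
    {v : EuclideanSpace ℝ (Fin d)} (hv : ‖v‖ = 1) :
    ∫ ω, ⟪X ω, v⟫ ^ 4 ∂P ≤ weakFourthSq P X :=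
  le_ciSup (f := fun w : Metric.sphere (0 : EuclideanSpace ℝ (Fin d)) 1 =>
      ∫ ω, ⟪X ω, (w : EuclideanSpace ℝ (Fin d))⟫ ^ 4 ∂P)
    ⟨M, Set.forall_mem_range.2 fun w => h w (by simp)⟩ ⟨v, by simpa using hv⟩

end WeakFourthMoment

lemma le_sq_mul_of_rpow_le {a b L : ℝ} (ha : 0 ≤ a) (hb : 0 ≤ b)
    (h : a ^ (1 / 4 : ℝ) ≤ L * b ^ (1 / 2 : ℝ)) : a ≤ (L ^ 2 * b) ^ 2 := by
  have h4 := pow_le_pow_left₀ (Real.rpow_nonneg ha _) h 4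
  rw [← Real.rpow_mul_natCast ha, mul_pow, ← Real.rpow_mul_natCast hb] at h4
  norm_num at h4
  linarith

section NormEquivalence

variable {Ω : Type*} [MeasurableSpace Ω] {P : Measure Ω} {d : ℕ}
  {X : Ω → EuclideanSpace ℝ (Fin d)} {L : ℝ}

lemma SatisfiesL4L2.memLp_inner (h42 : SatisfiesL4L2 P X L) (hX : Measurable X)
    (t : EuclideanSpace ℝ (Fin d)) : MemLp (fun ω => ⟪X ω, t⟫) 4 P :=
  memLp_inner_of_integrable_pow_four hX (h42 t).1

lemma SatisfiesL4L2.integral_inner_pow_four_le [IsFiniteMeasure P] (h42 : SatisfiesL4L2 P X L)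
    (hX : Measurable X) {v : EuclideanSpace ℝ (Fin d)} (hv : ‖v‖ = 1) :
    ∫ ω, ⟪X ω, v⟫ ^ 4 ∂P ≤ (L ^ 2 * matOpNorm (covMat P X)) ^ 2 := by
  have hsq : 0 ≤ ∫ ω, ⟪X ω, v⟫ ^ 2 ∂P := integral_nonneg fun _ => by positivity
  calc ∫ ω, ⟪X ω, v⟫ ^ 4 ∂P ≤ (L ^ 2 * ∫ ω, ⟪X ω, v⟫ ^ 2 ∂P) ^ 2 :=
        le_sq_mul_of_rpow_le (integral_nonneg fun _ => by positivity) hsq (h42 v).2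
    _ ≤ (L ^ 2 * matOpNorm (covMat P X)) ^ 2 := by
        gcongr
        exact integral_inner_sq_le_matOpNorm (h42.memLp_inner hX) hv

end NormEquivalence

section Truncation

variable {Ω : Type*} {d : ℕ} {X : Ω → EuclideanSpace ℝ (Fin d)} {α : ℝ}

lemma abs_inner_trunc_le (ω : Ω) (t : EuclideanSpace ℝ (Fin d)) :
    |⟪trunc X α ω, t⟫| ≤ |⟪X ω, t⟫| := by
  unfold trunc
  split_ifs <;> simp

lemma Measurable.trunc [MeasurableSpace Ω] (hX : Measurable X) : Measurable (trunc X α) :=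
  Measurable.ite (measurableSet_le hX.norm measurable_const) hX measurable_const

variable [MeasurableSpace Ω] {P : Measure Ω}

lemma memLp_inner_trunc {p : ENNReal} (hX : Measurable X)
    (h : ∀ t, MemLp (fun ω => ⟪X ω, t⟫) p P) (t : EuclideanSpace ℝ (Fin d)) :
    MemLp (fun ω => ⟪trunc X α ω, t⟫) p P :=
  (h t).mono (hX.trunc.inner measurable_const).aestronglyMeasurable
    (ae_of_all _ fun ω => abs_inner_trunc_le ω t)

lemma integral_inner_trunc_pow_four_le {t : EuclideanSpace ℝ (Fin d)}
    (h : Integrable (fun ω => ⟪X ω, t⟫ ^ 4) P) :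
    ∫ ω, ⟪trunc X α ω, t⟫ ^ 4 ∂P ≤ ∫ ω, ⟪X ω, t⟫ ^ 4 ∂P :=
  integral_mono_of_nonneg (ae_of_all _ fun _ => by positivity) h (ae_of_all _ fun ω => by
    simpa only [Even.pow_abs ⟨2, rfl⟩] using
      pow_le_pow_left₀ (abs_nonneg _) (abs_inner_trunc_le ω t) 4)

end Truncation

theorem weakVar_trunc_le_general
    {Ω : Type*} [MeasurableSpace Ω] (P : Measure Ω) [IsProbabilityMeasure P]
    {d : ℕ} (X : Ω → EuclideanSpace ℝ (Fin d)) (hX : Measurable X)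
    (L : ℝ) (h42 : SatisfiesL4L2 P X L)
    (α : ℝ) :
    weakVar P (trunc X α) ≤ weakFourth P X ∧
    weakFourth P X ≤ L ^ 2 * matOpNorm (covMat P X) ∧
    weakVar P (trunc X α) ≤ L ^ 2 * matOpNorm (covMat P X) := by
  set B := L ^ 2 * matOpNorm (covMat P X)
  have hB : 0 ≤ B := mul_nonneg (sq_nonneg L) (norm_nonneg _)
  have hX4 (v : EuclideanSpace ℝ (Fin d)) (hv : ‖v‖ = 1) : ∫ ω, ⟪X ω, v⟫ ^ 4 ∂P ≤ B ^ 2 :=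
    h42.integral_inner_pow_four_le hX hv
  have hfourth : weakFourth P X ≤ B := by
    rw [weakFourth_eq_sqrt, Real.sqrt_le_left hB]
    exact weakFourthSq_le (sq_nonneg B) hX4
  have htrunc : weakVar P (trunc X α) ≤ weakFourth P X := by
    refine Real.sqrt_le_sqrt (weakVarSq_le (memLp_inner_trunc hX (h42.memLp_inner hX))
      weakFourthSq_nonneg fun v hv => ?_)
    exact (integral_inner_trunc_pow_four_le (h42 v).1).trans
      (integral_inner_pow_four_le_weakFourthSq hX4 hv)
  exact ⟨htrunc, hfourth, htrunc.trans hfourth⟩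

/-- For a centered `X` satisfying the `L₄-L₂` norm equivalence with constant `L` and any
truncation level `α > 0`: `R_{X̃} ≤ v(X)`, `v(X) ≤ L² ‖Σ‖`, and in particular
`R_{X̃} ≤ L² ‖Σ‖`. -/
theorem weakVar_trunc_le
    {Ω : Type*} [MeasurableSpace Ω] (P : Measure Ω) [IsProbabilityMeasure P]
    {d : ℕ} (X : Ω → EuclideanSpace ℝ (Fin d)) (hX : Measurable X)
    (L : ℝ) (hL : 1 ≤ L) (hcent : IsCentered P X) (h42 : SatisfiesL4L2 P X L)
    (α : ℝ) (hα : 0 < α) :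
    weakVar P (trunc X α) ≤ weakFourth P X ∧
    weakFourth P X ≤ L ^ 2 * matOpNorm (covMat P X) ∧
    weakVar P (trunc X α) ≤ L ^ 2 * matOpNorm (covMat P X) :=
  weakVar_trunc_le_general P X hX L h42 α
end

section
/- Let ε_1,…,ε_d be independent symmetric random variables taking values in {−1,1}, let α_1 ≥ α_2 ≥ … ≥ α_d ≥ 0, and set X = (α_1 ε_1, …, α_d ε_d) with covariance Σ = 𝔼(X⊗X). Then ‖Σ‖ = α_1², and for all u, v in the Euclidean unit sphere S^{d−1}, 𝔼(vᵀ(X⊗X − Σ)u)² ≤ 2(α_1 α_2)²; consequently R_X ≤ √2 · α_1 α_2. -/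
open MeasureTheory ProbabilityTheory
open scoped RealInnerProductSpace

/-- The random vector `X = (α₁ ε₁, …, α_d ε_d)`. -/
noncomputable def radVec {Ω : Type*} {d : ℕ} (α : Fin d → ℝ) (ε : Fin d → Ω → ℝ) :
    Ω → EuclideanSpace ℝ (Fin d) :=
  fun ω => (WithLp.equiv 2 (∀ _ : Fin d, ℝ)).symm fun i => α i * ε i ω


/-!
Since `ε_i² = 1` and the `ε_i` are independent and centred, `𝔼 ε_i ε_j = δ_ij`, so
`Σ = diag(α_i²)` and `‖Σ‖ = α_1²`. The centred bilinear form `vᵀ(X⊗X − Σ)u` is the Rademacher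
chaos `∑_{i ≠ j} t_ij ε_i ε_j` with `t_ij = v_i α_i α_j u_j`. A mixed moment `𝔼 ∏ ε_m^{n_m}` is `1`
when every `n_m` is even and `0` otherwise, so for `i ≠ j`, `k ≠ l` the moment `𝔼 ε_i ε_j ε_k ε_l`
vanishes unless `{k, l} = {i, j}`. Hence the chaos has second moment
`∑ t_ij (t_ij + t_ji) ≤ 2 ∑ t_ij²`, and `α_i α_j ≤ α_1 α_2` for `i ≠ j` bounds this by
`2 (α_1 α_2)² ‖u‖² ‖v‖²`.
-/

namespace ProbabilityTheory

variable {Ω ι : Type*} [MeasurableSpace Ω] {P : Measure Ω}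

lemma integral_eq_zero_of_map_eq_map_neg {f : Ω → ℝ} (hf : AEMeasurable f P)
    (hsymm : P.map f = P.map (fun ω => -f ω)) : ∫ ω, f ω ∂P = 0 := by
  have h : ∫ x, x ∂(P.map f) = ∫ ω, f ω ∂P := integral_map hf aestronglyMeasurable_id
  have h' : ∫ x, x ∂(P.map (fun ω => -f ω)) = ∫ ω, -f ω ∂P :=
    integral_map hf.neg aestronglyMeasurable_id
  rw [hsymm, h', integral_neg] at h
  linarith

lemma integral_pow_of_sign [IsProbabilityMeasure P] {e : Ω → ℝ}
    (hval : ∀ ω, e ω = 1 ∨ e ω = -1) (hmean : ∫ ω, e ω ∂P = 0) (n : ℕ) :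
    ∫ ω, e ω ^ n ∂P = if Even n then 1 else 0 := by
  split_ifs with hn
  · have h : ∀ ω, e ω ^ n = 1 := fun ω => by
      rcases hval ω with h | h <;> simp [h, hn.neg_one_pow]
    simp [h]
  · have h : ∀ ω, e ω ^ n = e ω := fun ω => by
      rcases hval ω with h | h <;> simp [h, (Nat.not_even_iff_odd.mp hn).neg_one_pow]
    simp [h, hmean]

lemma even_indicator_sum_iff [DecidableEq ι] {i j k l : ι} (hij : i ≠ j) (hkl : k ≠ l) :
    (∀ m, Even ((if i = m then 1 else 0) + (if j = m then 1 else 0) +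
      (if k = m then 1 else 0) + (if l = m then 1 else 0))) ↔
    (k = i ∧ l = j ∨ k = j ∧ l = i) := by
  constructor
  · intro h
    have hi := h i
    have hj := h j
    by_cases hki : k = i <;> by_cases hli : l = i <;> by_cases hkj : k = j <;>
      by_cases hlj : l = j <;> simp_all [eq_comm, Nat.even_add_one]
  · rintro (⟨rfl, rfl⟩ | ⟨rfl, rfl⟩) m <;> split_ifs <;> decide

variable [Fintype ι] {ε : ι → Ω → ℝ}

lemma iIndepFun.integral_prod_pow_of_sign (hindep : iIndepFun ε P)
    (hmeas : ∀ i, Measurable (ε i)) (hval : ∀ i ω, ε i ω = 1 ∨ ε i ω = -1)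
    (hmean : ∀ i, ∫ ω, ε i ω ∂P = 0) (n : ι → ℕ) :
    ∫ ω, ∏ i, ε i ω ^ n i ∂P = if ∀ i, Even (n i) then 1 else 0 := by
  have := hindep.isProbabilityMeasure
  rw [hindep.integral_fun_prod_comp (f := fun i x => x ^ n i) (fun i => (hmeas i).aemeasurable)
    (fun i => by fun_prop)]
  simp only [integral_pow_of_sign (hval _) (hmean _), Finset.prod_boole, Finset.mem_univ,
    true_implies]

lemma integral_sum_sum {κ : Type*} [Fintype κ] {f : ι → κ → Ω → ℝ}
    (hf : ∀ i j, Integrable (f i j) P) :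
    ∫ ω, ∑ i, ∑ j, f i j ω ∂P = ∑ i, ∑ j, ∫ ω, f i j ω ∂P := by
  rw [integral_finsetSum _ fun i _ => integrable_finsetSum _ fun j _ => hf i j]
  exact Finset.sum_congr rfl fun i _ => integral_finsetSum _ fun j _ => hf i j

lemma iIndepFun.integral_mul_mul_mul_of_sign [DecidableEq ι] (hindep : iIndepFun ε P)
    (hmeas : ∀ i, Measurable (ε i)) (hval : ∀ i ω, ε i ω = 1 ∨ ε i ω = -1)
    (hmean : ∀ i, ∫ ω, ε i ω ∂P = 0) {i j k l : ι} (hij : i ≠ j) (hkl : k ≠ l) :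
    ∫ ω, ε i ω * ε j ω * (ε k ω * ε l ω) ∂P = if k = i ∧ l = j ∨ k = j ∧ l = i then 1 else 0 := by
  have hprod : ∀ ω, ε i ω * ε j ω * (ε k ω * ε l ω) = ∏ m, ε m ω ^
      ((if i = m then 1 else 0) + (if j = m then 1 else 0) +
        (if k = m then 1 else 0) + (if l = m then 1 else 0)) := fun ω => by
    simp only [pow_add, Finset.prod_mul_distrib, Finset.prod_pow_boole, Finset.mem_univ, if_true]
    ring
  simp_rw [hprod, hindep.integral_prod_pow_of_sign hmeas hval hmean, even_indicator_sum_iff hij hkl]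

lemma iIndepFun.integral_sq_sum_mul_of_sign [DecidableEq ι] (hindep : iIndepFun ε P)
    (hmeas : ∀ i, Measurable (ε i)) (hval : ∀ i ω, ε i ω = 1 ∨ ε i ω = -1)
    (hmean : ∀ i, ∫ ω, ε i ω ∂P = 0) (t : ι → ι → ℝ) (ht : ∀ i, t i i = 0) :
    ∫ ω, (∑ i, ∑ j, t i j * (ε i ω * ε j ω)) ^ 2 ∂P = ∑ i, ∑ j, t i j * (t i j + t j i) := by
  have := hindep.isProbabilityMeasure
  have habs : ∀ m ω, |ε m ω| = 1 := fun m ω => by rcases hval m ω with h | h <;> simp [h]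
  have hint : ∀ i j k l, Integrable
      (fun ω => t i j * (ε i ω * ε j ω) * (t k l * (ε k ω * ε l ω))) P := fun i j k l =>
    Integrable.of_bound (by fun_prop) (|t i j| * |t k l|)
      (ae_of_all _ fun ω => by simp [habs])
  have hterm : ∀ i j k l, ∫ ω, t i j * (ε i ω * ε j ω) * (t k l * (ε k ω * ε l ω)) ∂P =
      t i j * ((if k = i ∧ l = j then t k l else 0) + (if k = j ∧ l = i then t k l else 0)) := by
    intro i j k l
    rcases eq_or_ne i j with rfl | hij
    · simp [ht]
    rcases eq_or_ne k l with rfl | hkl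
    · simp [ht]
    have hmul : ∀ ω, t i j * (ε i ω * ε j ω) * (t k l * (ε k ω * ε l ω)) =
        t i j * t k l * (ε i ω * ε j ω * (ε k ω * ε l ω)) := fun ω => by ring
    simp_rw [hmul, integral_const_mul, hindep.integral_mul_mul_mul_of_sign hmeas hval hmean hij hkl]
    split_ifs <;> simp_all
  calc ∫ ω, (∑ i, ∑ j, t i j * (ε i ω * ε j ω)) ^ 2 ∂P
      = ∫ ω, ∑ i, ∑ j, ∑ k, ∑ l, t i j * (ε i ω * ε j ω) * (t k l * (ε k ω * ε l ω)) ∂P := by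
        simp_rw [sq, Finset.sum_mul, Finset.mul_sum]
    _ = ∑ i, ∑ j, ∑ k, ∑ l, ∫ ω, t i j * (ε i ω * ε j ω) * (t k l * (ε k ω * ε l ω)) ∂P := by
        rw [integral_sum_sum fun i j => integrable_finsetSum _ fun k _ =>
          integrable_finsetSum _ fun l _ => hint i j k l]
        exact Finset.sum_congr rfl fun i _ => Finset.sum_congr rfl fun j _ =>
          integral_sum_sum (hint i j)
    _ = _ := by
        simp [hterm, ← Finset.mul_sum, Finset.sum_add_distrib, ite_and]

lemma iIndepFun.integral_sq_sum_mul_of_sign_le [DecidableEq ι] (hindep : iIndepFun ε P)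
    (hmeas : ∀ i, Measurable (ε i)) (hval : ∀ i ω, ε i ω = 1 ∨ ε i ω = -1)
    (hmean : ∀ i, ∫ ω, ε i ω ∂P = 0) (t : ι → ι → ℝ) (ht : ∀ i, t i i = 0) :
    ∫ ω, (∑ i, ∑ j, t i j * (ε i ω * ε j ω)) ^ 2 ∂P ≤ 2 * ∑ i, ∑ j, t i j ^ 2 := by
  have hswap : ∑ i, ∑ j, t j i ^ 2 = ∑ i, ∑ j, t i j ^ 2 := Finset.sum_comm
  calc ∫ ω, (∑ i, ∑ j, t i j * (ε i ω * ε j ω)) ^ 2 ∂P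
      = ∑ i, ∑ j, t i j * (t i j + t j i) :=
        hindep.integral_sq_sum_mul_of_sign hmeas hval hmean t ht
    _ ≤ ∑ i, ∑ j, (t i j ^ 2 + (t i j ^ 2 + t j i ^ 2) / 2) := by
        gcongr with i _ j _
        nlinarith [sq_nonneg (t i j - t j i)]
    _ = 2 * ∑ i, ∑ j, t i j ^ 2 := by
        simp only [Finset.sum_add_distrib, ← Finset.sum_div, hswap]
        ring

end ProbabilityTheory

lemma sum_sq_offDiag_le {ι : Type*} [Fintype ι] [DecidableEq ι] {α : ι → ℝ} {c : ℝ}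
    (hc : ∀ i j, i ≠ j → α i * α j ≤ c) (hα : ∀ i, 0 ≤ α i) {u v : EuclideanSpace ℝ ι}
    (hu : ‖u‖ = 1) (hv : ‖v‖ = 1) :
    ∑ i, ∑ j, (if i = j then 0 else v i * α i * α j * u j) ^ 2 ≤ c ^ 2 := by
  have hterm : ∀ i j, (if i = j then 0 else v i * α i * α j * u j) ^ 2 ≤
      c ^ 2 * (v i ^ 2 * u j ^ 2) := fun i j => by
    split_ifs with hij
    · rw [zero_pow two_ne_zero]
      positivity
    · calc (v i * α i * α j * u j) ^ 2 = (α i * α j) ^ 2 * (v i ^ 2 * u j ^ 2) := by ring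
        _ ≤ _ := by
          gcongr ?_ * _
          exact pow_le_pow_left₀ (mul_nonneg (hα i) (hα j)) (hc i j hij) 2
  calc _ ≤ ∑ i, ∑ j, c ^ 2 * (v i ^ 2 * u j ^ 2) := by
        gcongr with i _ j _
        exact hterm i j
    _ = c ^ 2 * ((∑ i, v i ^ 2) * ∑ j, u j ^ 2) := by
        simp only [← Finset.mul_sum, Finset.sum_mul]
    _ = c ^ 2 := by
        rw [← EuclideanSpace.real_norm_sq_eq, ← EuclideanSpace.real_norm_sq_eq, hu, hv]
        ring

section RadVec

variable {Ω : Type*} {d : ℕ} {ε : Fin d → Ω → ℝ}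

lemma radVec_apply (α : Fin d → ℝ) (ω : Ω) (i : Fin d) : radVec α ε ω i = α i * ε i ω := rfl

variable [MeasurableSpace Ω] {P : Measure Ω}

lemma covMat_radVec (hindep : iIndepFun ε P) (hmeas : ∀ i, Measurable (ε i))
    (hval : ∀ i ω, ε i ω = 1 ∨ ε i ω = -1) (hmean : ∀ i, ∫ ω, ε i ω ∂P = 0) (α : Fin d → ℝ) :
    covMat P (radVec α ε) = Matrix.diagonal fun i => α i ^ 2 := by
  have := hindep.isProbabilityMeasure
  ext i j
  simp only [covMat, Matrix.of_apply, radVec_apply, Matrix.diagonal_apply]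
  rcases eq_or_ne i j with rfl | hij
  · have hsq : ∀ ω, α i * ε i ω * (α i * ε i ω) = α i ^ 2 := fun ω => by
      rcases hval i ω with h | h <;> simp [h, sq]
    simp [hsq]
  · have hmul : ∀ ω, α i * ε i ω * (α j * ε j ω) = α i * α j * (ε i ω * ε j ω) := fun ω => by
      ring
    simp_rw [hmul, integral_const_mul, (hindep.indepFun hij).integral_fun_mul_eq_mul_integral
      (hmeas i).aestronglyMeasurable (hmeas j).aestronglyMeasurable, hmean, if_neg hij]
    ring

open scoped Matrix.Norms.L2Operator in
lemma matOpNorm_diagonal (w : Fin d → ℝ) : matOpNorm (Matrix.diagonal w) = ‖w‖ :=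
  Matrix.l2_opNorm_diagonal w

lemma Antitone.norm_eq_apply_zero (hd : 0 < d) {w : Fin d → ℝ} (hw : Antitone w)
    (h0 : ∀ i, 0 ≤ w i) : ‖w‖ = w ⟨0, hd⟩ := by
  refine le_antisymm ((pi_norm_le_iff_of_nonneg (h0 _)).2 fun i => ?_) ?_
  · rw [Real.norm_of_nonneg (h0 i)]
    exact hw (Nat.zero_le _)
  · simpa [Real.norm_of_nonneg (h0 _)] using norm_le_pi_norm w ⟨0, hd⟩

lemma Antitone.mul_le_of_ne (hd : 1 < d) {α : Fin d → ℝ} (hmono : Antitone α)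
    (hnonneg : ∀ i, 0 ≤ α i) {i j : Fin d} (hij : i ≠ j) :
    α i * α j ≤ α ⟨0, Nat.zero_lt_of_lt hd⟩ * α ⟨1, hd⟩ := by
  have hle0 : ∀ k, α k ≤ α ⟨0, Nat.zero_lt_of_lt hd⟩ := fun k => hmono (Nat.zero_le _)
  have hle1 : ∀ k : Fin d, k.val ≠ 0 → α k ≤ α ⟨1, hd⟩ := fun k hk =>
    hmono (Nat.one_le_iff_ne_zero.2 hk)
  rcases Nat.eq_zero_or_pos i.val with hi | hi
  · have hj : j.val ≠ 0 := fun hj => hij (Fin.ext (hi.trans hj.symm))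
    rw [show i = ⟨0, Nat.zero_lt_of_lt hd⟩ from Fin.ext hi]
    exact mul_le_mul_of_nonneg_left (hle1 j hj) (hnonneg _)
  · rw [mul_comm]
    exact mul_le_mul (hle0 j) (hle1 i hi.ne') (hnonneg i) (hnonneg _)

lemma sum_mul_radVec_sub_covMat_mul (hindep : iIndepFun ε P) (hmeas : ∀ i, Measurable (ε i))
    (hval : ∀ i ω, ε i ω = 1 ∨ ε i ω = -1) (hmean : ∀ i, ∫ ω, ε i ω ∂P = 0) (α : Fin d → ℝ)
    (u v : EuclideanSpace ℝ (Fin d)) (ω : Ω) :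
    ∑ i, ∑ j, v i * (radVec α ε ω i * radVec α ε ω j - covMat P (radVec α ε) i j) * u j =
      ∑ i, ∑ j, (if i = j then 0 else v i * α i * α j * u j) * (ε i ω * ε j ω) := by
  rw [covMat_radVec hindep hmeas hval hmean]
  refine Finset.sum_congr rfl fun i _ => Finset.sum_congr rfl fun j _ => ?_
  simp only [radVec_apply, Matrix.diagonal_apply]
  split_ifs with hij
  · subst hij
    rcases hval i ω with h | h <;> simp [h, sq]
  · ring

end RadVec

lemma weakVar_le_sqrt {Ω : Type*} [MeasurableSpace Ω] {P : Measure Ω} {d : ℕ}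
    {Z : Ω → EuclideanSpace ℝ (Fin d)} {C : ℝ} (hC : 0 ≤ C)
    (h : ∀ u v : EuclideanSpace ℝ (Fin d), ‖u‖ = 1 → ‖v‖ = 1 →
      ∫ ω, (∑ i, ∑ j, v i * (Z ω i * Z ω j - covMat P Z i j) * u j) ^ 2 ∂P ≤ C) :
    weakVar P Z ≤ √C :=
  Real.sqrt_le_sqrt <| Real.iSup_le (fun p => h _ _ (mem_sphere_zero_iff_norm.1 p.1.2)
    (mem_sphere_zero_iff_norm.1 p.2.2)) hC

/-- For independent symmetric `±1`-valued `ε₁,…,ε_d`, weights `α₁ ≥ … ≥ α_d ≥ 0` and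
`X = (α₁ ε₁, …, α_d ε_d)` with covariance `Σ`: `‖Σ‖ = α₁²`, for all unit vectors `u, v`
`𝔼(vᵀ(X⊗X − Σ)u)² ≤ 2(α₁α₂)²`, and consequently `R_X ≤ √2 α₁ α₂`. -/
theorem rademacher_example
    {Ω : Type*} [MeasurableSpace Ω] (P : Measure Ω)
    {d : ℕ} (hd : 2 ≤ d) (ε : Fin d → Ω → ℝ) (hmeas : ∀ i, Measurable (ε i))
    (hval : ∀ i ω, ε i ω = 1 ∨ ε i ω = -1)
    (hsym : ∀ i, Measure.map (ε i) P = Measure.map (fun ω => -ε i ω) P)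
    (hindep : iIndepFun ε P)
    (α : Fin d → ℝ) (hmono : Antitone α) (hnonneg : ∀ i, 0 ≤ α i) :
    matOpNorm (covMat P (radVec α ε)) = α ⟨0, by omega⟩ ^ 2 ∧
    (∀ u v : EuclideanSpace ℝ (Fin d), ‖u‖ = 1 → ‖v‖ = 1 →
      ∫ ω, (∑ i, ∑ j, v i *
          (radVec α ε ω i * radVec α ε ω j - covMat P (radVec α ε) i j) * u j) ^ 2 ∂P ≤
        2 * (α ⟨0, by omega⟩ * α ⟨1, by omega⟩) ^ 2) ∧
    weakVar P (radVec α ε) ≤ Real.sqrt 2 * (α ⟨0, by omega⟩ * α ⟨1, by omega⟩) := by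
  have hmean : ∀ i, ∫ ω, ε i ω ∂P = 0 := fun i =>
    integral_eq_zero_of_map_eq_map_neg (hmeas i).aemeasurable (hsym i)
  have hmoment : ∀ u v : EuclideanSpace ℝ (Fin d), ‖u‖ = 1 → ‖v‖ = 1 →
      ∫ ω, (∑ i, ∑ j, v i *
          (radVec α ε ω i * radVec α ε ω j - covMat P (radVec α ε) i j) * u j) ^ 2 ∂P ≤
        2 * (α ⟨0, by omega⟩ * α ⟨1, by omega⟩) ^ 2 := fun u v hu hv => by
    simp_rw [sum_mul_radVec_sub_covMat_mul hindep hmeas hval hmean α u v]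
    grw [hindep.integral_sq_sum_mul_of_sign_le hmeas hval hmean _ fun i => if_pos rfl,
      sum_sq_offDiag_le (fun i j => hmono.mul_le_of_ne hd hnonneg) hnonneg hu hv]
  refine ⟨?_, hmoment, ?_⟩
  · rw [covMat_radVec hindep hmeas hval hmean, matOpNorm_diagonal]
    exact Antitone.norm_eq_apply_zero (by omega)
      (fun i j hij => pow_le_pow_left₀ (hnonneg j) (hmono hij) 2) fun i => sq_nonneg _
  · calc weakVar P (radVec α ε) ≤ √(2 * (α ⟨0, by omega⟩ * α ⟨1, by omega⟩) ^ 2) :=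
        weakVar_le_sqrt (by positivity) hmoment
      _ = √2 * (α ⟨0, by omega⟩ * α ⟨1, by omega⟩) := by
        rw [Real.sqrt_mul zero_le_two, Real.sqrt_sq (mul_nonneg (hnonneg _) (hnonneg _))]
end

section
/- Let Y be a centered random vector in ℝ^d with 𝔼‖Y‖₂⁴ < ∞ and covariance Σ = 𝔼(Y⊗Y). Then ‖𝔼((Y⊗Y − Σ)²)‖ ≤ d · R_Y², where R_Y² = sup_{v ∈ S^{d−1}, u ∈ S^{d−1}} 𝔼(vᵀ(Y⊗Y − Σ)u)². -/
open MeasureTheory ProbabilityTheory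
open scoped RealInnerProductSpace

/-!
Write `M = Y ⊗ Y - Σ` and `e_k` for the standard basis. For unit vectors `x`, `y`,
`yᵀ 𝔼(M²) x = 𝔼 ∑_k (yᵀ M e_k) (e_kᵀ M x) ≤ ½ ∑_k (𝔼 (yᵀ M e_k)² + 𝔼 (e_kᵀ M x)²) ≤ d R_Y²`,
since each of the `2d` expectations is one of the quantities whose supremum is `R_Y²`; and the
operator norm is the supremum of `yᵀ A x` over unit `x`, `y`. The fourth moment makes the entries
of `M` square-integrable, which justifies exchanging expectation with the finite sums and makes
the supremum defining `R_Y²` finite.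
-/

section

open Matrix

variable {m n : Type*} [Fintype m] [Fintype n]

theorem opNorm_toEuclideanCLM_le_of_dotProduct_mulVec_le [DecidableEq n] {A : Matrix n n ℝ}
    {C : ℝ} (hC : 0 ≤ C)
    (h : ∀ x y : EuclideanSpace ℝ n, ‖x‖ = 1 → ‖y‖ = 1 → y ⬝ᵥ A *ᵥ x ≤ C) :
    ‖toEuclideanCLM (𝕜 := ℝ) A‖ ≤ C :=
  ContinuousLinearMap.opNorm_le_of_re_inner_le hC fun x y hx hy => by
    simpa [real_inner_comm, inner_toEuclideanCLM] using h x y hx hy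

theorem dotProduct_mul_mulVec_eq_sum {l R : Type*} [Fintype l] [DecidableEq m] [CommSemiring R]
    (A : Matrix l m R) (B : Matrix m n R) (x : n → R) (y : l → R) :
    y ⬝ᵥ (A * B) *ᵥ x = ∑ k, (y ⬝ᵥ A *ᵥ Pi.single k 1) * (Pi.single k 1 ⬝ᵥ B *ᵥ x) := by
  simp only [← mulVec_mulVec, dotProduct_mulVec y A, dotProduct_single_one, single_one_dotProduct]
  rfl

theorem abs_dotProduct_mulVec_le_sum_abs (M : Matrix m n ℝ) {u : n → ℝ} {v : m → ℝ}
    (hu : ∀ j, |u j| ≤ 1) (hv : ∀ i, |v i| ≤ 1) :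
    |v ⬝ᵥ M *ᵥ u| ≤ ∑ i, ∑ j, |M i j| := by
  simp only [dotProduct, mulVec, Finset.mul_sum]
  refine (Finset.abs_sum_le_sum_abs _ _).trans <| Finset.sum_le_sum fun i _ =>
    (Finset.abs_sum_le_sum_abs _ _).trans <| Finset.sum_le_sum fun j _ => ?_
  rw [abs_mul, abs_mul]
  calc |v i| * (|M i j| * |u j|) ≤ 1 * (|M i j| * 1) := by
        gcongr
        exacts [hv i, hu j]
    _ = |M i j| := by ring

variable {Ω : Type*} [MeasurableSpace Ω] {P : Measure Ω}

theorem dotProduct_integral_mulVec {N : Ω → Matrix m n ℝ}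
    (hN : ∀ i j, Integrable (fun ω => N ω i j) P) (x : n → ℝ) (y : m → ℝ) :
    y ⬝ᵥ (of fun i j => ∫ ω, N ω i j ∂P) *ᵥ x = ∫ ω, y ⬝ᵥ N ω *ᵥ x ∂P := by
  simp only [dotProduct, mulVec, of_apply]
  rw [integral_finsetSum _ fun i _ => ?_]
  · refine Finset.sum_congr rfl fun i _ => ?_
    rw [integral_const_mul, integral_finsetSum _ fun j _ => (hN i j).mul_const _]
    simp only [integral_mul_const]
  · exact (integrable_finsetSum _ fun j _ => (hN i j).mul_const _).const_mul _

theorem memLp_dotProduct_mulVec {p : ENNReal} {M : Ω → Matrix m n ℝ}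
    (hM : ∀ i j, MemLp (fun ω => M ω i j) p P) (x : n → ℝ) (y : m → ℝ) :
    MemLp (fun ω => y ⬝ᵥ M ω *ᵥ x) p P := by
  simp only [dotProduct, mulVec]
  exact memLp_finsetSum _ fun i _ =>
    (memLp_finsetSum _ fun j _ => (hM i j).mul_const (x j)).const_mul (y i)

theorem opNorm_integral_mul_self_le [DecidableEq n] {M : Ω → Matrix n n ℝ}
    (hM : ∀ i j, MemLp (fun ω => M ω i j) 2 P) {R : ℝ} (hR : 0 ≤ R)
    (hbound : ∀ u v : EuclideanSpace ℝ n, ‖u‖ = 1 → ‖v‖ = 1 →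
      ∫ ω, (v ⬝ᵥ M ω *ᵥ u) ^ 2 ∂P ≤ R) :
    ‖toEuclideanCLM (𝕜 := ℝ) (of fun i j => ∫ ω, (M ω * M ω) i j ∂P)‖ ≤
      Fintype.card n * R := by
  refine opNorm_toEuclideanCLM_le_of_dotProduct_mulVec_le (by positivity) fun x y hx hy => ?_
  set e : n → EuclideanSpace ℝ n := fun k => PiLp.single 2 k 1
  have he : ∀ k, ‖e k‖ = 1 := fun k => by simp [e, PiLp.norm_single]
  set a : n → Ω → ℝ := fun k ω => y ⬝ᵥ M ω *ᵥ e k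
  set b : n → Ω → ℝ := fun k ω => e k ⬝ᵥ M ω *ᵥ x
  have ha : ∀ k, MemLp (a k) 2 P := fun k => memLp_dotProduct_mulVec hM _ _
  have hb : ∀ k, MemLp (b k) 2 P := fun k => memLp_dotProduct_mulVec hM _ _
  have hab : ∀ k, Integrable (fun ω => (a k ω ^ 2 + b k ω ^ 2) / 2) P := fun k =>
    ((ha k).integrable_sq.add (hb k).integrable_sq).div_const 2
  have hMM : ∀ i j, Integrable (fun ω => (M ω * M ω) i j) P := fun i j => by
    simp only [mul_apply]
    exact integrable_finsetSum _ fun k _ => (hM i k).integrable_mul (hM k j)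
  calc y ⬝ᵥ (of fun i j => ∫ ω, (M ω * M ω) i j ∂P) *ᵥ x
      = ∫ ω, ∑ k, a k ω * b k ω ∂P := by
        rw [dotProduct_integral_mulVec hMM]
        simp only [dotProduct_mul_mulVec_eq_sum, a, b, e, PiLp.ofLp_single]
    _ ≤ ∫ ω, ∑ k, (a k ω ^ 2 + b k ω ^ 2) / 2 ∂P := by
        refine integral_mono (integrable_finsetSum _ fun k _ => (ha k).integrable_mul (hb k))
          (integrable_finsetSum _ fun k _ => hab k) fun ω => Finset.sum_le_sum fun k _ => ?_
        linarith [two_mul_le_add_sq (a k ω) (b k ω)]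
    _ = ∑ k, (∫ ω, a k ω ^ 2 ∂P + ∫ ω, b k ω ^ 2 ∂P) / 2 := by
        rw [integral_finsetSum _ fun k _ => hab k]
        simp only [integral_div, integral_add (ha _).integrable_sq (hb _).integrable_sq]
    _ ≤ ∑ _k : n, (R + R) / 2 := by
        gcongr with k
        · exact hbound _ _ (he k) hy
        · exact hbound _ _ hx (he k)
    _ = Fintype.card n * R := by simp

theorem bddAbove_integral_sq_dotProduct_mulVec {M : Ω → Matrix n n ℝ}
    (hM : ∀ i j, MemLp (fun ω => M ω i j) 2 P) :
    BddAbove (Set.range fun p : Metric.sphere (0 : EuclideanSpace ℝ n) 1 ×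
        Metric.sphere (0 : EuclideanSpace ℝ n) 1 =>
      ∫ ω, ((p.2 : EuclideanSpace ℝ n) ⬝ᵥ M ω *ᵥ (p.1 : EuclideanSpace ℝ n)) ^ 2 ∂P) := by
  have hS : MemLp (fun ω => ∑ i, ∑ j, |M ω i j|) 2 P :=
    memLp_finsetSum _ fun i _ => memLp_finsetSum _ fun j _ => (hM i j).abs
  have hcoord : ∀ (z : Metric.sphere (0 : EuclideanSpace ℝ n) 1) i,
      |(z : EuclideanSpace ℝ n) i| ≤ 1 := fun z i =>
    (PiLp.norm_apply_le _ i).trans (mem_sphere_zero_iff_norm.1 z.2).le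
  refine ⟨∫ ω, (∑ i, ∑ j, |M ω i j|) ^ 2 ∂P, ?_⟩
  rintro _ ⟨⟨u, v⟩, rfl⟩
  refine integral_mono_of_nonneg (.of_forall fun ω => sq_nonneg _) hS.integrable_sq
    (.of_forall fun ω => sq_le_sq.2 ?_)
  exact (abs_dotProduct_mulVec_le_sum_abs _ (hcoord u) (hcoord v)).trans (le_abs_self _)

variable {d : ℕ} {Y : Ω → EuclideanSpace ℝ (Fin d)}

theorem memLp_outerMat_sub_covMat_apply [IsFiniteMeasure P] (hY : Measurable Y)
    (hY4 : Integrable (fun ω => ‖Y ω‖ ^ 4) P) (i j : Fin d) :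
    MemLp (fun ω => (outerMat (Y ω) - covMat P Y) i j) 2 P := by
  have hnorm : MemLp (fun ω => ‖Y ω‖ ^ 2) 2 P :=
    (memLp_two_iff_integrable_sq (by fun_prop)).2 (by simpa only [← pow_mul] using hY4)
  have hYY : MemLp (fun ω => Y ω i * Y ω j) 2 P := by
    refine hnorm.of_le (by fun_prop) (.of_forall fun ω => ?_)
    rw [norm_mul, norm_pow, norm_norm, sq]
    exact mul_le_mul (PiLp.norm_apply_le _ i) (PiLp.norm_apply_le _ j) (norm_nonneg _)
      (norm_nonneg _)
  exact hYY.sub (memLp_const _)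

theorem weakVarSq_nonneg : 0 ≤ weakVarSq P Y :=
  Real.iSup_nonneg fun _ => integral_nonneg fun _ => sq_nonneg _

theorem weakVarSq_eq_iSup_integral_sq_dotProduct_mulVec :
    weakVarSq P Y = ⨆ p : Metric.sphere (0 : EuclideanSpace ℝ (Fin d)) 1 ×
        Metric.sphere (0 : EuclideanSpace ℝ (Fin d)) 1,
      ∫ ω, ((p.2 : EuclideanSpace ℝ (Fin d)) ⬝ᵥ (outerMat (Y ω) - covMat P Y) *ᵥ
        (p.1 : EuclideanSpace ℝ (Fin d))) ^ 2 ∂P := by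
  simp only [weakVarSq, dotProduct, mulVec, Finset.mul_sum, mul_assoc, outerMat, Matrix.sub_apply,
    of_apply]

theorem integral_sq_dotProduct_mulVec_le_weakVarSq [IsFiniteMeasure P] (hY : Measurable Y)
    (hY4 : Integrable (fun ω => ‖Y ω‖ ^ 4) P) {u v : EuclideanSpace ℝ (Fin d)} (hu : ‖u‖ = 1)
    (hv : ‖v‖ = 1) :
    ∫ ω, (v ⬝ᵥ (outerMat (Y ω) - covMat P Y) *ᵥ u) ^ 2 ∂P ≤ weakVarSq P Y := by
  rw [weakVarSq_eq_iSup_integral_sq_dotProduct_mulVec]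
  exact le_ciSup (bddAbove_integral_sq_dotProduct_mulVec (memLp_outerMat_sub_covMat_apply hY hY4))
    (⟨u, mem_sphere_zero_iff_norm.2 hu⟩, ⟨v, mem_sphere_zero_iff_norm.2 hv⟩)

end

theorem opNorm_second_moment_le_dim_mul_weakVarSq_general
    {Ω : Type*} [MeasurableSpace Ω] (P : Measure Ω) [IsProbabilityMeasure P]
    {d : ℕ} (Y : Ω → EuclideanSpace ℝ (Fin d)) (hY : Measurable Y)
    (hY4 : Integrable (fun ω => ‖Y ω‖ ^ 4) P) :
    matOpNorm (Matrix.of fun i j =>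
        ∫ ω, ((outerMat (Y ω) - covMat P Y) * (outerMat (Y ω) - covMat P Y)) i j ∂P) ≤
      d * weakVarSq P Y := by
  simpa [matOpNorm] using opNorm_integral_mul_self_le (memLp_outerMat_sub_covMat_apply hY hY4)
    weakVarSq_nonneg fun u v hu hv => integral_sq_dotProduct_mulVec_le_weakVarSq hY hY4 hu hv

/-- For a centered random vector `Y` in `ℝ^d` with `𝔼‖Y‖₂⁴ < ∞` and covariance `Σ`,
`‖𝔼((Y⊗Y - Σ)²)‖ ≤ d · R_Y²`. -/
theorem opNorm_second_moment_le_dim_mul_weakVarSq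
    {Ω : Type*} [MeasurableSpace Ω] (P : Measure Ω) [IsProbabilityMeasure P]
    {d : ℕ} (Y : Ω → EuclideanSpace ℝ (Fin d)) (hY : Measurable Y)
    (hY4 : Integrable (fun ω => ‖Y ω‖ ^ 4) P) (hcent : IsCentered P Y) :
    matOpNorm (Matrix.of fun i j =>
        ∫ ω, ((outerMat (Y ω) - covMat P Y) * (outerMat (Y ω) - covMat P Y)) i j ∂P) ≤
      d * weakVarSq P Y :=
  opNorm_second_moment_le_dim_mul_weakVarSq_general P Y hY hY4
end

section
/- Let Y be a centered random vector in ℝ^d with 𝔼‖Y‖₂⁴ < ∞ and covariance Σ = 𝔼(Y⊗Y), and assume that ‖𝔼((Y⊗Y)²)‖ ≥ Tr(Σ)‖Σ‖. Then the weak variance satisfies R_Y ≥ √((r(Σ) − 1)/d) · ‖Σ‖, where r(Σ) = Tr(Σ)/‖Σ‖ is the effective rank. -/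
open MeasureTheory ProbabilityTheory
open scoped RealInnerProductSpace

/-! For a unit vector `x`, the quadratic form of `M - Σ²`, where `M = 𝔼((Y⊗Y)²)`, is
`∑ₖ Var(eₖᵀ (Y⊗Y) x)`: a sum of `d` variances, each nonnegative and at most `R_Y²`. As `M - Σ²` is
symmetric this gives `‖M - Σ²‖ ≤ d R_Y²`, so `Tr(Σ)‖Σ‖ ≤ ‖M‖ ≤ d R_Y² + ‖Σ‖²`, which rearranges
to the claim. -/

open Matrix

theorem ContinuousLinearMap.norm_le_of_isSymmetric_of_abs_re_inner_self_le {𝕜 E : Type*}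
    [RCLike 𝕜] [NormedAddCommGroup E] [InnerProductSpace 𝕜 E] {T : E →L[𝕜] E}
    (hT : (T : E →ₗ[𝕜] E).IsSymmetric) {c : ℝ} (hc : 0 ≤ c)
    (h : ∀ x, ‖x‖ = 1 → |RCLike.re (inner 𝕜 (T x) x)| ≤ c) : ‖T‖ ≤ c := by
  rw [T.norm_eq_iSup_rayleighQuotient hT]
  refine ciSup_le fun x => ?_
  rcases eq_or_ne x 0 with rfl | hx
  · simpa using hc
  have hx' : ((‖x‖⁻¹ : ℝ) : 𝕜) ≠ 0 := by simpa using hx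
  have hu : ‖((‖x‖⁻¹ : ℝ) : 𝕜) • x‖ = 1 := by simp [norm_smul, hx]
  rw [← T.rayleigh_smul x hx', rayleighQuotient, reApplyInnerSelf_apply, hu, one_pow, div_one]
  exact h _ hu

theorem matOpNorm_le_of_abs_dotProduct_mulVec_le {d : ℕ} {B : Matrix (Fin d) (Fin d) ℝ}
    (hB : B.IsSymm) {c : ℝ} (hc : 0 ≤ c)
    (h : ∀ x : EuclideanSpace ℝ (Fin d), ‖x‖ = 1 → |x ⬝ᵥ B *ᵥ x| ≤ c) : matOpNorm B ≤ c :=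
  ContinuousLinearMap.norm_le_of_isSymmetric_of_abs_re_inner_self_le
    (isSymmetric_toEuclideanLin_iff.mpr (isHermitian_iff_isSymm.mpr hB)) hc fun x hx => by
      rw [RCLike.re_to_real, real_inner_comm, inner_toEuclideanCLM]
      exact h x hx

theorem matOpNorm_nonneg {d : ℕ} (A : Matrix (Fin d) (Fin d) ℝ) : 0 ≤ matOpNorm A :=
  norm_nonneg _

theorem matOpNorm_sub_matOpNorm_le {d : ℕ} (A B : Matrix (Fin d) (Fin d) ℝ) :
    matOpNorm A - matOpNorm B ≤ matOpNorm (A - B) := by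
  simpa only [matOpNorm, map_sub] using norm_sub_norm_le _ _

theorem matOpNorm_mul_le {d : ℕ} (A B : Matrix (Fin d) (Fin d) ℝ) :
    matOpNorm (A * B) ≤ matOpNorm A * matOpNorm B := by
  simpa only [matOpNorm, map_mul] using norm_mul_le _ _

theorem Matrix.IsSymm.dotProduct_mul_self_mulVec {n α : Type*} [Fintype n] [CommSemiring α]
    {A : Matrix n n α} (hA : A.IsSymm) (x : n → α) :
    x ⬝ᵥ (A * A) *ᵥ x = A *ᵥ x ⬝ᵥ A *ᵥ x := by
  rw [← mulVec_mulVec, dotProduct_mulVec, ← mulVec_transpose, hA.eq]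

theorem Matrix.IsSymm.mul_self {n α : Type*} [Fintype n] [CommSemiring α] {A : Matrix n n α}
    (hA : A.IsSymm) :
    (A * A).IsSymm := by
  simpa only [hA.eq] using isSymm_transpose_mul_self A

theorem outerMat_isSymm {d : ℕ} (z : EuclideanSpace ℝ (Fin d)) : (outerMat z).IsSymm := by
  ext i j
  simp [outerMat, mul_comm]

theorem dotProduct_outerMat_mulVec {d : ℕ} (z x y : EuclideanSpace ℝ (Fin d)) :
    x ⬝ᵥ outerMat z *ᵥ y = ⟪x, z⟫ * ⟪z, y⟫ := by
  simp only [outerMat, dotProduct, mulVec, of_apply, PiLp.inner_apply, RCLike.inner_apply,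
    conj_trivial]
  rw [Finset.sum_mul_sum]
  refine Finset.sum_congr rfl fun i _ => ?_
  rw [Finset.mul_sum]
  exact Finset.sum_congr rfl fun j _ => by ring

theorem abs_dotProduct_outerMat_mulVec_le {d : ℕ} (z x y : EuclideanSpace ℝ (Fin d)) :
    |x ⬝ᵥ outerMat z *ᵥ y| ≤ ‖x‖ * ‖y‖ * ‖z‖ ^ 2 := by
  rw [dotProduct_outerMat_mulVec, abs_mul]
  calc |⟪x, z⟫| * |⟪z, y⟫| ≤ (‖x‖ * ‖z‖) * (‖z‖ * ‖y‖) := by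
        gcongr <;> exact abs_real_inner_le_norm _ _
    _ = ‖x‖ * ‖y‖ * ‖z‖ ^ 2 := by ring

noncomputable def expectMat {Ω : Type*} [MeasurableSpace Ω] (P : Measure Ω) {n : Type*}
    (F : Ω → Matrix n n ℝ) : Matrix n n ℝ :=
  Matrix.of fun i j => ∫ ω, F ω i j ∂P

section expectMat

variable {Ω : Type*} [MeasurableSpace Ω] {P : Measure Ω} {n : Type*} {F : Ω → Matrix n n ℝ}

theorem expectMat_isSymm (hF : ∀ ω, (F ω).IsSymm) : (expectMat P F).IsSymm := by
  ext i j
  simp only [expectMat, transpose_apply, of_apply]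
  exact integral_congr_ae (Filter.Eventually.of_forall fun ω => (hF ω).apply i j)

theorem dotProduct_expectMat_mulVec [Fintype n] (hF : ∀ i j, Integrable (fun ω => F ω i j) P)
    (x y : n → ℝ) : x ⬝ᵥ expectMat P F *ᵥ y = ∫ ω, x ⬝ᵥ F ω *ᵥ y ∂P := by
  simp only [dotProduct, mulVec, expectMat, of_apply, Finset.mul_sum]
  rw [integral_finsetSum _ fun i _ => integrable_finsetSum _ fun j _ =>
    ((hF i j).mul_const _).const_mul _]
  refine Finset.sum_congr rfl fun i _ => ?_
  rw [integral_finsetSum _ fun j _ => ((hF i j).mul_const _).const_mul _]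
  refine Finset.sum_congr rfl fun j _ => ?_
  rw [integral_const_mul, integral_mul_const]

end expectMat

theorem covMat_eq_expectMat {Ω : Type*} [MeasurableSpace Ω] (P : Measure Ω) {d : ℕ}
    (Y : Ω → EuclideanSpace ℝ (Fin d)) :
    covMat P Y = expectMat P fun ω => outerMat (Y ω) :=
  rfl

noncomputable def fourthMomentMat {Ω : Type*} [MeasurableSpace Ω] (P : Measure Ω) {d : ℕ}
    (Y : Ω → EuclideanSpace ℝ (Fin d)) : Matrix (Fin d) (Fin d) ℝ :=
  expectMat P fun ω => outerMat (Y ω) * outerMat (Y ω)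

theorem covMat_isSymm {Ω : Type*} [MeasurableSpace Ω] (P : Measure Ω) {d : ℕ}
    (Y : Ω → EuclideanSpace ℝ (Fin d)) : (covMat P Y).IsSymm :=
  expectMat_isSymm fun ω => outerMat_isSymm (Y ω)

theorem fourthMomentMat_isSymm {Ω : Type*} [MeasurableSpace Ω] (P : Measure Ω) {d : ℕ}
    (Y : Ω → EuclideanSpace ℝ (Fin d)) : (fourthMomentMat P Y).IsSymm :=
  expectMat_isSymm fun ω => (outerMat_isSymm (Y ω)).mul_self

theorem Matrix.apply_eq_single_dotProduct_mulVec_single {n 𝕜 : Type*} [Fintype n]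
    [DecidableEq n] [RCLike 𝕜] (A : Matrix n n 𝕜) (i j : n) :
    A i j = EuclideanSpace.single i 1 ⬝ᵥ A *ᵥ EuclideanSpace.single j 1 := by
  simp

theorem Matrix.mulVec_apply_eq_single_dotProduct {n 𝕜 : Type*} [Fintype n] [DecidableEq n]
    [RCLike 𝕜] (A : Matrix n n 𝕜) (x : n → 𝕜) (k : n) :
    (A *ᵥ x) k = EuclideanSpace.single k 1 ⬝ᵥ A *ᵥ x := by
  simp

section Moments

variable {Ω : Type*} [MeasurableSpace Ω] {P : Measure Ω} {d : ℕ}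
  {Y : Ω → EuclideanSpace ℝ (Fin d)}

theorem memLp_two_dotProduct_outerMat_mulVec (hY : AEStronglyMeasurable Y P)
    (hY4 : Integrable (fun ω => ‖Y ω‖ ^ 4) P) (x y : EuclideanSpace ℝ (Fin d)) :
    MemLp (fun ω => x ⬝ᵥ outerMat (Y ω) *ᵥ y) 2 P := by
  simp only [dotProduct_outerMat_mulVec]
  have hmeas : AEStronglyMeasurable (fun ω => ⟪x, Y ω⟫ * ⟪Y ω, y⟫) P :=
    (by fun_prop : Continuous fun z : EuclideanSpace ℝ (Fin d) => ⟪x, z⟫ * ⟪z, y⟫)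
      |>.comp_aestronglyMeasurable hY
  refine (memLp_two_iff_integrable_sq hmeas).mpr <|
    (hY4.const_mul ((‖x‖ * ‖y‖) ^ 2)).mono' (hmeas.pow 2) (Filter.Eventually.of_forall fun ω => ?_)
  rw [Real.norm_eq_abs, abs_pow, ← dotProduct_outerMat_mulVec]
  calc |x ⬝ᵥ outerMat (Y ω) *ᵥ y| ^ 2 ≤ (‖x‖ * ‖y‖ * ‖Y ω‖ ^ 2) ^ 2 := by
        gcongr; exact abs_dotProduct_outerMat_mulVec_le _ _ _
    _ = (‖x‖ * ‖y‖) ^ 2 * ‖Y ω‖ ^ 4 := by ring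

theorem integrable_outerMat_apply [IsFiniteMeasure P] (hY : AEStronglyMeasurable Y P)
    (hY4 : Integrable (fun ω => ‖Y ω‖ ^ 4) P) (i j : Fin d) :
    Integrable (fun ω => outerMat (Y ω) i j) P := by
  simp only [Matrix.apply_eq_single_dotProduct_mulVec_single]
  exact (memLp_two_dotProduct_outerMat_mulVec hY hY4 _ _).integrable one_le_two

theorem integrable_outerMat_mul_self_apply (hY : AEStronglyMeasurable Y P)
    (hY4 : Integrable (fun ω => ‖Y ω‖ ^ 4) P) (i j : Fin d) :
    Integrable (fun ω => (outerMat (Y ω) * outerMat (Y ω)) i j) P := by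
  simp only [mul_apply, Matrix.apply_eq_single_dotProduct_mulVec_single (outerMat (Y _))]
  exact integrable_finsetSum _ fun k _ =>
    (memLp_two_dotProduct_outerMat_mulVec hY hY4 _ _).integrable_mul
      (memLp_two_dotProduct_outerMat_mulVec hY hY4 _ _)

end Moments

section WeakVariance

variable {Ω : Type*} [MeasurableSpace Ω] {P : Measure Ω} {d : ℕ}
  {Y : Ω → EuclideanSpace ℝ (Fin d)}

theorem weakVarSq_nonneg_s17 (P : Measure Ω) (Y : Ω → EuclideanSpace ℝ (Fin d)) :
    0 ≤ weakVarSq P Y :=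
  Real.iSup_nonneg fun _ => integral_nonneg fun _ => sq_nonneg _

theorem integral_dotProduct_outerMat_mulVec [IsFiniteMeasure P] (hY : AEStronglyMeasurable Y P)
    (hY4 : Integrable (fun ω => ‖Y ω‖ ^ 4) P) (x y : Fin d → ℝ) :
    ∫ ω, x ⬝ᵥ outerMat (Y ω) *ᵥ y ∂P = x ⬝ᵥ covMat P Y *ᵥ y := by
  rw [covMat_eq_expectMat, dotProduct_expectMat_mulVec (integrable_outerMat_apply hY hY4)]

theorem weakVarSq_eq_iSup_variance [IsFiniteMeasure P] (hY : AEStronglyMeasurable Y P)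
    (hY4 : Integrable (fun ω => ‖Y ω‖ ^ 4) P) :
    weakVarSq P Y = ⨆ p : Metric.sphere (0 : EuclideanSpace ℝ (Fin d)) 1 ×
        Metric.sphere (0 : EuclideanSpace ℝ (Fin d)) 1,
      variance (fun ω => (p.2 : EuclideanSpace ℝ (Fin d)) ⬝ᵥ outerMat (Y ω) *ᵥ p.1) P := by
  refine iSup_congr fun p => ?_
  rw [variance_eq_integral (memLp_two_dotProduct_outerMat_mulVec hY hY4 _ _).aemeasurable,
    integral_dotProduct_outerMat_mulVec hY hY4]
  congr with ω
  simp only [← dotProduct_sub, ← sub_mulVec]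
  simp [dotProduct, mulVec, outerMat, Finset.mul_sum, mul_assoc]

theorem variance_le_weakVarSq [IsProbabilityMeasure P] (hY : AEStronglyMeasurable Y P)
    (hY4 : Integrable (fun ω => ‖Y ω‖ ^ 4) P) {x y : EuclideanSpace ℝ (Fin d)}
    (hx : ‖x‖ = 1) (hy : ‖y‖ = 1) :
    variance (fun ω => x ⬝ᵥ outerMat (Y ω) *ᵥ y) P ≤ weakVarSq P Y := by
  rw [weakVarSq_eq_iSup_variance hY hY4]
  refine le_ciSup (f := fun p : Metric.sphere (0 : EuclideanSpace ℝ (Fin d)) 1 ×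
      Metric.sphere (0 : EuclideanSpace ℝ (Fin d)) 1 =>
    variance (fun ω => (p.2 : EuclideanSpace ℝ (Fin d)) ⬝ᵥ outerMat (Y ω) *ᵥ p.1) P)
    ⟨∫ ω, ‖Y ω‖ ^ 4 ∂P, ?_⟩ (⟨y, by simpa using hy⟩, ⟨x, by simpa using hx⟩)
  rintro _ ⟨⟨⟨u, hu⟩, ⟨v, hv⟩⟩, rfl⟩
  rw [mem_sphere_zero_iff_norm] at hu hv
  refine (variance_le_expectation_sq
    (memLp_two_dotProduct_outerMat_mulVec hY hY4 _ _).aestronglyMeasurable).trans <|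
    integral_mono_of_nonneg (Filter.Eventually.of_forall fun ω => sq_nonneg _) hY4 <|
      Filter.Eventually.of_forall fun ω => ?_
  have := abs_dotProduct_outerMat_mulVec_le (Y ω) v u
  rw [hu, hv, one_mul, one_mul] at this
  calc _ = |v ⬝ᵥ outerMat (Y ω) *ᵥ u| ^ 2 := (sq_abs _).symm
    _ ≤ (‖Y ω‖ ^ 2) ^ 2 := by gcongr
    _ = ‖Y ω‖ ^ 4 := by ring

end WeakVariance

section FourthMoment

variable {Ω : Type*} [MeasurableSpace Ω] {P : Measure Ω} [IsProbabilityMeasure P] {d : ℕ}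
  {Y : Ω → EuclideanSpace ℝ (Fin d)}

theorem sum_variance_outerMat_mulVec (hY : AEStronglyMeasurable Y P)
    (hY4 : Integrable (fun ω => ‖Y ω‖ ^ 4) P) (x : EuclideanSpace ℝ (Fin d)) :
    ∑ k, variance (fun ω => (outerMat (Y ω) *ᵥ x) k) P =
      x ⬝ᵥ (fourthMomentMat P Y - covMat P Y * covMat P Y) *ᵥ x := by
  have hL2 k : MemLp (fun ω => (outerMat (Y ω) *ᵥ x) k) 2 P := by
    simpa only [Matrix.mulVec_apply_eq_single_dotProduct] using
      memLp_two_dotProduct_outerMat_mulVec hY hY4 (EuclideanSpace.single k 1) x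
  have hmean k : ∫ ω, (outerMat (Y ω) *ᵥ x) k ∂P = (covMat P Y *ᵥ x) k := by
    simp only [Matrix.mulVec_apply_eq_single_dotProduct, integral_dotProduct_outerMat_mulVec hY hY4]
  have hsq : ∑ k, ∫ ω, (outerMat (Y ω) *ᵥ x) k ^ 2 ∂P =
      x ⬝ᵥ fourthMomentMat P Y *ᵥ x := by
    rw [← integral_finsetSum _ fun k _ => (hL2 k).integrable_sq, fourthMomentMat,
      dotProduct_expectMat_mulVec (integrable_outerMat_mul_self_apply hY hY4)]
    refine integral_congr_ae (Filter.Eventually.of_forall fun ω => ?_)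
    beta_reduce
    rw [(outerMat_isSymm (Y ω)).dotProduct_mul_self_mulVec]
    simp only [dotProduct, sq]
  simp only [variance_eq_sub (hL2 _), Pi.pow_apply, hmean, Finset.sum_sub_distrib, hsq,
    sub_mulVec, dotProduct_sub]
  rw [(covMat_isSymm P Y).dotProduct_mul_self_mulVec]
  simp only [dotProduct, sq]

theorem abs_dotProduct_fourthMomentMat_sub_mulVec_le (hY : AEStronglyMeasurable Y P)
    (hY4 : Integrable (fun ω => ‖Y ω‖ ^ 4) P) {x : EuclideanSpace ℝ (Fin d)} (hx : ‖x‖ = 1) :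
    |x ⬝ᵥ (fourthMomentMat P Y - covMat P Y * covMat P Y) *ᵥ x|
      ≤ d * weakVarSq P Y := by
  rw [← sum_variance_outerMat_mulVec hY hY4,
    abs_of_nonneg (Finset.sum_nonneg fun k _ => variance_nonneg _ _)]
  calc ∑ k, variance (fun ω => (outerMat (Y ω) *ᵥ x) k) P ≤ ∑ _k : Fin d, weakVarSq P Y :=
        Finset.sum_le_sum fun k _ => by
          simpa only [← Matrix.mulVec_apply_eq_single_dotProduct] using
            variance_le_weakVarSq hY hY4 (x := EuclideanSpace.single k 1) (by simp) hx
    _ = d * weakVarSq P Y := by simp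

theorem matOpNorm_fourthMomentMat_sub_le (hY : AEStronglyMeasurable Y P)
    (hY4 : Integrable (fun ω => ‖Y ω‖ ^ 4) P) :
    matOpNorm (fourthMomentMat P Y - covMat P Y * covMat P Y)
      ≤ d * weakVarSq P Y :=
  matOpNorm_le_of_abs_dotProduct_mulVec_le
    ((fourthMomentMat_isSymm P Y).sub (covMat_isSymm P Y).mul_self)
    (mul_nonneg d.cast_nonneg (weakVarSq_nonneg_s17 P Y))
    fun _ hx => abs_dotProduct_fourthMomentMat_sub_mulVec_le hY hY4 hx

end FourthMoment

theorem weakVar_lower_bound_general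
    {Ω : Type*} [MeasurableSpace Ω] (P : Measure Ω) [IsProbabilityMeasure P]
    {d : ℕ} (Y : Ω → EuclideanSpace ℝ (Fin d)) (hY : Measurable Y)
    (hY4 : Integrable (fun ω => ‖Y ω‖ ^ 4) P)
    (hFKG : (covMat P Y).trace * matOpNorm (covMat P Y) ≤
      matOpNorm (Matrix.of fun i j => ∫ ω, (outerMat (Y ω) * outerMat (Y ω)) i j ∂P)) :
    Real.sqrt ((effRank (covMat P Y) - 1) / d) * matOpNorm (covMat P Y) ≤ weakVar P Y := by
  set S := covMat P Y
  set s := matOpNorm S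
  have key : S.trace * s - s ^ 2 ≤ d * weakVarSq P Y := by
    have hB := matOpNorm_fourthMomentMat_sub_le hY.aestronglyMeasurable hY4
    have htri := matOpNorm_sub_matOpNorm_le (fourthMomentMat P Y) (S * S)
    have hmul := matOpNorm_mul_le S S
    change _ ≤ matOpNorm (fourthMomentMat P Y) at hFKG
    linarith
  calc √((effRank S - 1) / d) * s = √((S.trace / s - 1) / d * s ^ 2) := by
        rw [Real.sqrt_mul' _ (sq_nonneg s), Real.sqrt_sq (matOpNorm_nonneg S), effRank]
    _ = √((S.trace * s - s ^ 2) / d) := by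
        -- also at `s = 0`, where `effRank S = S.trace / 0 = 0`
        rcases eq_or_ne s 0 with hs | hs
        · simp [hs]
        · field_simp
    _ ≤ weakVar P Y := Real.sqrt_le_sqrt <|
        div_le_of_le_mul₀ d.cast_nonneg (weakVarSq_nonneg_s17 P Y) (by linarith)

/-- If a centered `Y` with `𝔼‖Y‖₂⁴ < ∞` and covariance `Σ` satisfies
`‖𝔼((Y⊗Y)²)‖ ≥ Tr(Σ)‖Σ‖`, then `R_Y ≥ √((r(Σ) - 1)/d) ‖Σ‖`. -/
theorem weakVar_lower_bound
    {Ω : Type*} [MeasurableSpace Ω] (P : Measure Ω) [IsProbabilityMeasure P]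
    {d : ℕ} (Y : Ω → EuclideanSpace ℝ (Fin d)) (hY : Measurable Y)
    (hY4 : Integrable (fun ω => ‖Y ω‖ ^ 4) P) (hcent : IsCentered P Y)
    (hFKG : (covMat P Y).trace * matOpNorm (covMat P Y) ≤
      matOpNorm (Matrix.of fun i j => ∫ ω, (outerMat (Y ω) * outerMat (Y ω)) i j ∂P)) :
    Real.sqrt ((effRank (covMat P Y) - 1) / d) * matOpNorm (covMat P Y) ≤ weakVar P Y :=
  weakVar_lower_bound_general P Y hY hY4 hFKG
end
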